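/- arXiv:2111.03309 — 8 statements merged into one kernel-verified Lean document; each statement's English description precedes it below -/
import Mathlib

section
/- For every finite simple graph G on vertex set {1,…,n} (n ≥ 1) with clique number ω(G), the maximum of Σ_{{i,j}∈E(G)} x_i·x_j over all vectors x ∈ ℝⁿ with x_i ≥ 0 for all i and Σ_{i=1}^n x_i = 1 equals ½·(1 − 1/ω(G)); in particular this value is an attained maximum (achieved by distributing weight 1/ω(G) uniformly on the vertices of a maximum clique). -/
open Finset


/-- the product `x i * x j` associated to an unordered pair `{i, j}` -/
noncomputable def edgeProd {n : ℕ} (x : Fin n → ℝ) : Sym2 (Fin n) → ℝ :=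
  Sym2.lift ⟨fun i j => x i * x j, fun i j => mul_comm (x i) (x j)⟩

/-- the quadratic form `∑ i ∑ j [i ∼ j] x i x j` (each edge counted twice). -/
noncomputable def gsum {n : ℕ} (G : SimpleGraph (Fin n)) [DecidableRel G.Adj]
    (x : Fin n → ℝ) : ℝ :=
  ∑ i, ∑ j, if G.Adj i j then x i * x j else 0

lemma edge_sum_eq {n : ℕ} (G : SimpleGraph (Fin n)) [DecidableRel G.Adj] (x : Fin n → ℝ) :
    (∑ e ∈ G.edgeFinset, edgeProd x e) * 2 = gsum G x := by
  have h1 : ∑ d : G.Dart, edgeProd x d.edge = ∑ e ∈ G.edgeFinset, 2 * edgeProd x e := by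
    rw [← Finset.sum_fiberwise_of_maps_to (t := G.edgeFinset) (g := SimpleGraph.Dart.edge)
      (fun d _ => SimpleGraph.mem_edgeFinset.mpr d.edge_mem) (fun d => edgeProd x d.edge)]
    refine Finset.sum_congr rfl fun e he => ?_
    rw [Finset.sum_congr rfl (fun d hd => by
      rw [(Finset.mem_filter.mp hd).2]), Finset.sum_const,
      G.dart_edge_fiber_card e (SimpleGraph.mem_edgeFinset.mp he)]
    simp [two_mul]
  have h2 : ∀ d : G.Dart, edgeProd x d.edge = x d.fst * x d.snd := by
    intro d
    rw [SimpleGraph.Dart.edge, Sym2.mk, edgeProd]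
    exact Sym2.lift_mk _ _ _
  have h3 : ∑ d : G.Dart, x d.fst * x d.snd = gsum G x := by
    rw [gsum, ← Finset.sum_product', Finset.sum_ite, Finset.sum_const_zero, add_zero]
    refine Finset.sum_bij (fun d _ => d.toProd) ?_ ?_ ?_ ?_
    · intro d _; simp [d.adj]
    · intro d _ d' _ h; exact SimpleGraph.Dart.ext _ _ h
    · intro p hp
      simp only [Finset.mem_filter] at hp
      exact ⟨⟨p, hp.2⟩, Finset.mem_univ _, rfl⟩
    · intro d _; rfl
  calc (∑ e ∈ G.edgeFinset, edgeProd x e) * 2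
      = ∑ e ∈ G.edgeFinset, 2 * edgeProd x e := by
        rw [Finset.sum_mul]; exact Finset.sum_congr rfl fun e _ => mul_comm _ 2
    _ = ∑ d : G.Dart, edgeProd x d.edge := h1.symm
    _ = ∑ d : G.Dart, x d.fst * x d.snd := Finset.sum_congr rfl fun d _ => h2 d
    _ = gsum G x := h3

lemma gsum_eq_of_clique {n : ℕ} (G : SimpleGraph (Fin n)) [DecidableRel G.Adj]
    (x : Fin n → ℝ) (t : Finset (Fin n))
    (ht : ∀ i ∈ t, ∀ j ∈ t, i ≠ j → G.Adj i j)
    (hx : ∀ i, i ∉ t → x i = 0) :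
    gsum G x = (∑ i ∈ t, x i) ^ 2 - ∑ i ∈ t, x i ^ 2 := by
  rw [gsum]
  have restrict : (∑ i, ∑ j, if G.Adj i j then x i * x j else 0)
      = ∑ i ∈ t, ∑ j ∈ t, (if G.Adj i j then x i * x j else 0) := by
    rw [← Finset.sum_subset (Finset.subset_univ t) (fun i _ hi => by simp [hx i hi])]
    refine Finset.sum_congr rfl fun i hi => ?_
    rw [← Finset.sum_subset (Finset.subset_univ t) (fun j _ hj => by simp [hx j hj])]
  rw [restrict]
  have inner : ∀ i ∈ t, (∑ j ∈ t, if G.Adj i j then x i * x j else 0)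
      = x i * (∑ j ∈ t, x j) - x i ^ 2 := by
    intro i hi
    have : ∀ j ∈ t, (if G.Adj i j then x i * x j else 0)
        = x i * x j - (if j = i then x i * x j else 0) := by
      intro j hj
      by_cases h : j = i
      · subst h; simp [G.irrefl]
      · rw [if_neg h, if_pos (ht i hi j hj (fun e => h e.symm))]; ring
    rw [Finset.sum_congr rfl this, Finset.sum_sub_distrib, Finset.sum_ite_eq' t i, if_pos hi,
      Finset.mul_sum]
    ring
  rw [Finset.sum_congr rfl inner, Finset.sum_sub_distrib, ← Finset.sum_mul]
  ring

lemma gsum_shift {n : ℕ} (G : SimpleGraph (Fin n)) [DecidableRel G.Adj]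
    (x : Fin n → ℝ) (u v : Fin n) (hadj : ¬ G.Adj u v) (c : ℝ) :
    gsum G (fun i => x i + c * ((if i = u then 1 else 0) - if i = v then 1 else 0))
      = gsum G x + 2 * c * ((∑ j, if G.Adj u j then x j else 0)
          - ∑ j, if G.Adj v j then x j else 0) := by
  set d : Fin n → ℝ := fun i => (if i = u then 1 else 0) - (if i = v then 1 else 0) with hd
  have hδ : ∀ (f : Fin n → ℝ), ∑ i, d i * f i = f u - f v := by
    intro f
    simp [hd, sub_mul, ite_mul, Finset.sum_sub_distrib, Finset.sum_ite_eq']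
  have key : ∀ i j : Fin n, (if G.Adj i j then (x i + c * d i) * (x j + c * d j) else 0)
      = (if G.Adj i j then x i * x j else 0)
        + d i * (c * (if G.Adj i j then x j else 0))
        + d j * (c * (if G.Adj i j then x i else 0))
        + d i * (d j * (c ^ 2 * (if G.Adj i j then 1 else 0))) := by
    intro i j; split_ifs with h <;> ring
  have expand : gsum G (fun i => x i + c * d i)
      = gsum G x
        + (∑ i, ∑ j, d i * (c * (if G.Adj i j then x j else 0)))
        + (∑ i, ∑ j, d j * (c * (if G.Adj i j then x i else 0)))
        + (∑ i, ∑ j, d i * (d j * (c ^ 2 * (if G.Adj i j then 1 else 0)))) := by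
    rw [gsum, gsum, Finset.sum_congr rfl fun i _ => Finset.sum_congr rfl fun j _ => key i j]
    simp [Finset.sum_add_distrib]
  have S2 : (∑ i, ∑ j, d i * (c * (if G.Adj i j then x j else 0)))
      = c * (∑ j, if G.Adj u j then x j else 0) - c * (∑ j, if G.Adj v j then x j else 0) := by
    have : ∀ i : Fin n, ∑ j, d i * (c * (if G.Adj i j then x j else 0))
        = d i * (c * ∑ j, if G.Adj i j then x j else 0) := by
      intro i; simp only [Finset.mul_sum]
    rw [Finset.sum_congr rfl fun i _ => this i, hδ]
  have S3 : (∑ i, ∑ j, d j * (c * (if G.Adj i j then x i else 0)))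
      = c * (∑ j, if G.Adj u j then x j else 0) - c * (∑ j, if G.Adj v j then x j else 0) := by
    rw [Finset.sum_comm]
    have swap : ∀ i j : Fin n, (if G.Adj i j then x i else 0) = (if G.Adj j i then x i else 0) :=
      fun i j => if_congr (G.adj_comm i j) rfl rfl
    have : ∀ j : Fin n, ∑ i, d j * (c * (if G.Adj i j then x i else 0))
        = d j * (c * ∑ i, if G.Adj j i then x i else 0) := by
      intro j
      simp only [Finset.mul_sum]
      exact Finset.sum_congr rfl fun i _ => by rw [swap i j]
    rw [Finset.sum_congr rfl fun j _ => this j, hδ]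
  have S4 : (∑ i, ∑ j, d i * (d j * (c ^ 2 * (if G.Adj i j then 1 else 0)))) = 0 := by
    have : ∀ i : Fin n, ∑ j, d j * (c ^ 2 * (if G.Adj i j then 1 else 0))
        = c ^ 2 * (if G.Adj i u then 1 else 0) - c ^ 2 * (if G.Adj i v then 1 else 0) :=
      fun i => hδ _
    have h2 : ∀ i : Fin n, ∑ j, d i * (d j * (c ^ 2 * (if G.Adj i j then 1 else 0)))
        = d i * (c ^ 2 * (if G.Adj i u then 1 else 0)
            - c ^ 2 * (if G.Adj i v then 1 else 0)) := by
      intro i; rw [← this i]; simp only [Finset.mul_sum]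
    rw [Finset.sum_congr rfl fun i _ => h2 i, hδ]
    have h3 : ¬ G.Adj v u := fun h => hadj h.symm
    simp [G.irrefl, hadj, h3]
  rw [show (fun i => x i + c * ((if i = u then 1 else 0) - if i = v then 1 else 0))
      = fun i => x i + c * d i from rfl, expand, S2, S3, S4]
  ring

lemma shift_step {n : ℕ} (G : SimpleGraph (Fin n)) [DecidableRel G.Adj]
    (x : Fin n → ℝ) (hx0 : ∀ i, 0 ≤ x i) (hx1 : (∑ i, x i) = 1)
    (u v : Fin n) (huv : u ≠ v) (hadj : ¬ G.Adj u v) (hu : x u ≠ 0) (hv : x v ≠ 0)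
    (hR : (∑ j, if G.Adj v j then x j else 0) ≤ ∑ j, if G.Adj u j then x j else 0) :
    ∃ y : Fin n → ℝ, (∀ i, 0 ≤ y i) ∧ (∑ i, y i) = 1 ∧
      ({i ∈ (univ : Finset (Fin n)) | y i ≠ 0}
        ⊆ ({i ∈ (univ : Finset (Fin n)) | x i ≠ 0}).erase v) ∧ gsum G x ≤ gsum G y := by
  refine ⟨fun i => x i + x v * ((if i = u then 1 else 0) - if i = v then 1 else 0),
    ?_, ?_, ?_, ?_⟩
  · intro i
    dsimp only
    by_cases h1 : i = u
    · rw [if_pos h1, if_neg (fun h => huv (h1.symm.trans h))]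
      simpa using add_nonneg (hx0 i) (hx0 v)
    · by_cases h2 : i = v
      · rw [if_neg h1, if_pos h2, h2]
        linarith [hx0 v]
      · rw [if_neg h1, if_neg h2]
        simpa using hx0 i
  · rw [Finset.sum_add_distrib, hx1, ← Finset.mul_sum]
    simp [Finset.sum_sub_distrib, Finset.sum_ite_eq']
  · intro i hi
    simp only [Finset.mem_filter, Finset.mem_univ, true_and, Finset.mem_erase] at hi ⊢
    by_cases h2 : i = v
    · exfalso; apply hi
      rw [if_neg (fun h => huv (h.symm.trans h2)), if_pos h2, h2]; ring
    · refine ⟨h2, ?_⟩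
      by_cases h1 : i = u
      · exact h1 ▸ hu
      · rw [if_neg h1, if_neg h2] at hi
        simpa using hi
  · rw [gsum_shift G x u v hadj (x v)]
    have h1 : 0 ≤ x v := hx0 v
    nlinarith

lemma one_le_cliqueNum {n : ℕ} (hn : 1 ≤ n) (G : SimpleGraph (Fin n))
    [DecidableRel G.Adj] : 1 ≤ G.cliqueNum := by
  have hc : G.IsClique (↑({⟨0, hn⟩} : Finset (Fin n))) := by
    simp [SimpleGraph.isClique_singleton]
  have := @SimpleGraph.IsClique.card_le_cliqueNum _ G _ _ hc
  simpa using this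

lemma gsum_le {n : ℕ} (hn : 1 ≤ n) (G : SimpleGraph (Fin n)) [DecidableRel G.Adj] :
    ∀ (k : ℕ) (x : Fin n → ℝ), (∀ i, 0 ≤ x i) → (∑ i, x i) = 1 →
      #({i ∈ (univ : Finset (Fin n)) | x i ≠ 0}) ≤ k →
      gsum G x ≤ 1 - 1 / (G.cliqueNum : ℝ) := by
  have hω : 1 ≤ G.cliqueNum := one_le_cliqueNum hn G
  have hωR : (1:ℝ) ≤ (G.cliqueNum : ℝ) := by exact_mod_cast hω
  intro k
  induction k with
  | zero =>
    intro x hx0 hx1 hcard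
    have hemp : ({i ∈ (univ : Finset (Fin n)) | x i ≠ 0}) = ∅ :=
      Finset.card_eq_zero.mp (Nat.le_zero.mp hcard)
    have hz : ∀ i, x i = 0 := by
      intro i
      by_contra h
      have hmem : i ∈ ({i ∈ (univ : Finset (Fin n)) | x i ≠ 0}) := by simp [h]
      rw [hemp] at hmem
      exact absurd hmem (Finset.notMem_empty i)
    rw [Finset.sum_congr rfl fun i _ => hz i] at hx1
    simp at hx1
  | succ k ih =>
    intro x hx0 hx1 hcard
    set t : Finset (Fin n) := {i ∈ (univ : Finset (Fin n)) | x i ≠ 0} with htdef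
    by_cases hcl : ∀ i ∈ t, ∀ j ∈ t, i ≠ j → G.Adj i j
    · -- clique case
      have hx : ∀ i, i ∉ t → x i = 0 := by
        intro i hi
        by_contra h
        exact hi (by simp [htdef, h])
      have hsum : ∑ i ∈ t, x i = 1 := by
        rw [htdef, Finset.sum_filter_ne_zero]
        exact hx1
      have hne : t.Nonempty := by
        rcases Finset.eq_empty_or_nonempty t with h | h
        · rw [h] at hsum; simp at hsum
        · exact h
      have hcardpos : (0:ℝ) < #t := by exact_mod_cast Finset.card_pos.mpr hne
      have hclique : G.IsClique (↑t : Set (Fin n)) := by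
        intro a ha b hb hab
        exact hcl a (by exact_mod_cast ha) b (by exact_mod_cast hb) hab
      have hcard_le : #t ≤ G.cliqueNum :=
        @SimpleGraph.IsClique.card_le_cliqueNum _ G _ _ hclique
      have hcardR : (#t : ℝ) ≤ (G.cliqueNum : ℝ) := by exact_mod_cast hcard_le
      have hcs : (1:ℝ) ≤ (#t : ℝ) * ∑ i ∈ t, x i ^ 2 := by
        have h := sq_sum_le_card_mul_sum_sq (s := t) (f := x)
        rw [hsum] at h
        exact_mod_cast by simpa using h
      have hS : 1 / (G.cliqueNum : ℝ) ≤ ∑ i ∈ t, x i ^ 2 := by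
        have h1 : 1 / (#t:ℝ) ≤ ∑ i ∈ t, x i ^ 2 := by
          rw [div_le_iff₀ hcardpos]
          linarith [hcs]
        have h2 : 1 / (G.cliqueNum:ℝ) ≤ 1 / (#t:ℝ) :=
          one_div_le_one_div_of_le hcardpos hcardR
        linarith
      rw [gsum_eq_of_clique G x t hcl hx, hsum]
      linarith [hS]
    · push_neg at hcl
      obtain ⟨u, hu, v, hv, huv, hadj⟩ := hcl
      have hxu : x u ≠ 0 := (Finset.mem_filter.mp hu).2
      have hxv : x v ≠ 0 := (Finset.mem_filter.mp hv).2
      have hvmem : v ∈ t := hv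
      have humem : u ∈ t := hu
      have main : ∀ a b : Fin n, a ≠ b → ¬ G.Adj a b → x a ≠ 0 → x b ≠ 0 → b ∈ t →
          (∑ j, if G.Adj b j then x j else 0) ≤ (∑ j, if G.Adj a j then x j else 0) →
          gsum G x ≤ 1 - 1 / (G.cliqueNum : ℝ) := by
        intro a b hab hnadj ha hb hbt hle
        obtain ⟨y, hy0, hy1, hysub, hyge⟩ := shift_step G x hx0 hx1 a b hab hnadj ha hb hle
        have hycard : #({i ∈ (univ : Finset (Fin n)) | y i ≠ 0}) ≤ k := by
          calc #({i ∈ (univ : Finset (Fin n)) | y i ≠ 0}) ≤ #(t.erase b) :=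
                Finset.card_le_card hysub
            _ = #t - 1 := Finset.card_erase_of_mem hbt
            _ ≤ k := by omega
        exact le_trans hyge (ih y hy0 hy1 hycard)
      rcases le_total (∑ j, if G.Adj v j then x j else 0)
          (∑ j, if G.Adj u j then x j else 0) with h | h
      · exact main u v huv hadj hxu hxv hvmem h
      · exact main v u (Ne.symm huv) (fun hh => hadj hh.symm) hxv hxu humem h

/-- **Motzkin–Straus theorem.** For a graph `G` on vertex set `{1, …, n}` (`n ≥ 1`)
with clique number `ω(G)`, the maximum of `Σ_{{i,j} ∈ E(G)} x_i x_j` over all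
nonnegative vectors `x` with `Σ x_i = 1` is attained and equals `½(1 − 1/ω(G))`. -/
theorem motzkin_straus (n : ℕ) (hn : 1 ≤ n) (G : SimpleGraph (Fin n)) [DecidableRel G.Adj] :
    IsGreatest {y : ℝ | ∃ x : Fin n → ℝ, (∀ i, 0 ≤ x i) ∧ (∑ i, x i) = 1 ∧
        y = ∑ e ∈ G.edgeFinset, edgeProd x e}
      (1 / 2 * (1 - 1 / (G.cliqueNum : ℝ))) := by
  have hω : 1 ≤ G.cliqueNum := one_le_cliqueNum hn G
  have hω0 : (0:ℝ) < (G.cliqueNum : ℝ) := by exact_mod_cast hω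
  constructor
  · obtain ⟨s, hs⟩ := G.exists_isNClique_cliqueNum
    set ω : ℝ := (G.cliqueNum : ℝ) with hωdef
    have hcard : #s = G.cliqueNum := hs.2
    have hconst : ∀ (c : ℝ), ∑ i, (if i ∈ s then c else 0) = (#s : ℝ) * c := by
      intro c
      rw [Finset.sum_ite_mem, Finset.univ_inter, Finset.sum_const, nsmul_eq_mul]
    set x : Fin n → ℝ := fun i => if i ∈ s then ω⁻¹ else 0 with hxdef
    have hx0 : ∀ i, 0 ≤ x i := by
      intro i
      simp only [hxdef]
      split_ifs
      · positivity
      · exact le_rfl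
    have hsx : ∑ i ∈ s, x i = 1 := by
      rw [Finset.sum_congr rfl (fun i hi => show x i = ω⁻¹ by rw [hxdef]; exact if_pos hi),
        Finset.sum_const, nsmul_eq_mul, hcard]
      exact mul_inv_cancel₀ hω0.ne'
    have hx1 : (∑ i, x i) = 1 := by
      rw [hxdef, hconst, hcard] at *
      exact mul_inv_cancel₀ hω0.ne'
    have hsx2 : ∑ i ∈ s, x i ^ 2 = ω⁻¹ := by
      rw [Finset.sum_congr rfl (fun i hi =>
        show x i ^ 2 = ω⁻¹ ^ 2 by simp only [hxdef, if_pos hi]),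
        Finset.sum_const, nsmul_eq_mul, hcard]
      rw [sq]
      rw [← mul_assoc, mul_inv_cancel₀ hω0.ne', one_mul]
    have hclq : ∀ i ∈ s, ∀ j ∈ s, i ≠ j → G.Adj i j := fun i hi j hj hij =>
      hs.1 (Finset.mem_coe.mpr hi) (Finset.mem_coe.mpr hj) hij
    have hxout : ∀ i, i ∉ s → x i = 0 := fun i hi => by rw [hxdef]; exact if_neg hi
    have hg : gsum G x = 1 - ω⁻¹ := by
      rw [gsum_eq_of_clique G x s hclq hxout, hsx, hsx2]
      ring
    have he := edge_sum_eq G x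
    rw [hg] at he
    refine ⟨x, hx0, hx1, ?_⟩
    have h1ω : 1 / ω = ω⁻¹ := one_div ω
    linarith
  · rintro y ⟨x, hx0, hx1, rfl⟩
    have h := gsum_le hn G (#({i ∈ (univ : Finset (Fin n)) | x i ≠ 0})) x hx0 hx1 le_rfl
    have he := edge_sum_eq G x
    linarith
end

section
/- For every finite simple graph G on n vertices, λ(G) ≤ (1 − 1/ω(G))·n, where ω(G) is the clique number of G. Equivalently, if G is K_{r+1}-free then λ(G) ≤ (1 − 1/r)·n. -/
/-- `G` contains a copy of `H` as a subgraph,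
i.e. a subgraph isomorphic to `H`. -/
def HasSubgraphCopy {α β : Type*} (H : SimpleGraph α) (G : SimpleGraph β) : Prop :=
  ∃ f : H →g G, Function.Injective f

lemma adjMatrix_isHermitian {n : ℕ} (G : SimpleGraph (Fin n)) [DecidableRel G.Adj] :
    (G.adjMatrix ℝ).IsHermitian := by
  show Matrix.conjTranspose (G.adjMatrix ℝ) = G.adjMatrix ℝ
  ext i j
  simp only [Matrix.conjTranspose_apply, SimpleGraph.adjMatrix_apply, star_trivial]
  by_cases h : G.Adj i j
  · simp [h, h.symm]
  · have h' : ¬ G.Adj j i := fun hji => h hji.symm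
    simp [h, h']

/-- the adjacency spectral radius of `G`: the largest eigenvalue of the
(real symmetric) adjacency matrix of `G` -/
noncomputable def adjSpectralRadius {n : ℕ} (G : SimpleGraph (Fin n)) : ℝ :=
  letI := Classical.decRel G.Adj
  ⨆ i, (adjMatrix_isHermitian G).eigenvalues i

/-!
The heart of the proof is the Motzkin–Straus inequality: for `x ≥ 0`,
`xᵀ A x ≤ (1 - 1/ω) (∑ xᵢ)²`. If the support of `x` contains two non-adjacent vertices `i`, `j`
with `(A x)ⱼ ≤ (A x)ᵢ`, moving the weight of `j` onto `i` keeps `∑ xᵢ`, shrinks the support and does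
not decrease `xᵀ A x`, because `i` and `j` contribute no cross term. Once the support is a clique
of size at most `ω`, Cauchy–Schwarz gives `∑ xᵢ² ≥ (∑ xᵢ)² / ω`, and `xᵀ A x ≤ (∑ xᵢ)² - ∑ xᵢ²`.
For a unit eigenvector `v` this yields
`λ = vᵀ A v ≤ |v|ᵀ A |v| ≤ (1 - 1/ω) (∑ |vᵢ|)² ≤ (1 - 1/ω) n`.
-/

open Finset Matrix

namespace SimpleGraph

theorem cliqueNum_le_of_not_hasSubgraphCopy {V : Type*} {G : SimpleGraph V} {r : ℕ}
    (h : ¬HasSubgraphCopy (completeGraph (Fin (r + 1))) G) : G.cliqueNum ≤ r := by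
  have hfree : G.CliqueFree (r + 1) := cliqueFree_iff.2 ⟨fun c => h ⟨c.toHom, c.injective⟩⟩
  obtain ⟨s, hs⟩ := G.exists_isNClique_cliqueNum
  by_contra! hr
  exact hfree.mono hr s hs

section Lagrangian

variable {V : Type*} [Fintype V] (G : SimpleGraph V) [DecidableRel G.Adj]

lemma dotProduct_mulVec_adjMatrix_le_abs (x : V → ℝ) :
    x ⬝ᵥ G.adjMatrix ℝ *ᵥ x ≤ |x| ⬝ᵥ G.adjMatrix ℝ *ᵥ |x| := by
  simp only [dotProduct_mulVec_adjMatrix, Pi.abs_apply, ← abs_mul]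
  refine sum_le_sum fun i _ => sum_le_sum fun j _ => ?_
  split_ifs
  exacts [le_abs_self _, le_rfl]

lemma dotProduct_mulVec_adjMatrix_le_sq_sum_sub_sum_sq {x : V → ℝ} (hx : 0 ≤ x) :
    x ⬝ᵥ G.adjMatrix ℝ *ᵥ x ≤ (∑ i, x i) ^ 2 - ∑ i, x i ^ 2 := by
  classical
  rw [dotProduct_mulVec_adjMatrix, sq, sum_mul_sum, le_sub_iff_add_le, ← sum_add_distrib]
  refine sum_le_sum fun i _ => ?_
  have hdiag : x i ^ 2 = ∑ j, if i = j then x i * x j else 0 := by simp [sq]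
  rw [hdiag, ← sum_add_distrib]
  refine sum_le_sum fun j _ => ?_
  have := mul_nonneg (hx i) (hx j)
  split_ifs with hadj heq
  exacts [absurd heq (G.ne_of_adj hadj), by linarith, by linarith, by linarith]

lemma dotProduct_mulVec_adjMatrix_le_of_card_le {k : ℕ} {s : Finset V} (hsk : #s ≤ k)
    {x : V → ℝ} (hx : 0 ≤ x) (hxs : ∀ i ∉ s, x i = 0) :
    x ⬝ᵥ G.adjMatrix ℝ *ᵥ x ≤ (1 - 1 / k) * (∑ i, x i) ^ 2 := by
  have hsum : ∑ i ∈ s, x i = ∑ i, x i := sum_subset (subset_univ s) fun i _ hi => hxs i hi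
  have hsq : ∑ i ∈ s, x i ^ 2 ≤ ∑ i, x i ^ 2 :=
    sum_le_sum_of_subset_of_nonneg (subset_univ s) fun i _ _ => sq_nonneg (x i)
  have hcs : (∑ i, x i) ^ 2 ≤ (∑ i, x i ^ 2) * k := calc
    (∑ i, x i) ^ 2 = (∑ i ∈ s, x i) ^ 2 := by rw [hsum]
    _ ≤ #s * ∑ i ∈ s, x i ^ 2 := sq_sum_le_card_mul_sum_sq
    _ ≤ k * ∑ i, x i ^ 2 := by gcongr
    _ = (∑ i, x i ^ 2) * k := mul_comm _ _
  have := div_le_of_le_mul₀ (Nat.cast_nonneg' k) (sum_nonneg fun i _ => sq_nonneg (x i)) hcs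
  calc x ⬝ᵥ G.adjMatrix ℝ *ᵥ x ≤ (∑ i, x i) ^ 2 - ∑ i, x i ^ 2 :=
        G.dotProduct_mulVec_adjMatrix_le_sq_sum_sub_sum_sq hx
    _ ≤ (∑ i, x i) ^ 2 - (∑ i, x i) ^ 2 / k := by gcongr
    _ = (1 - 1 / k) * (∑ i, x i) ^ 2 := by ring

variable [DecidableEq V]

lemma dotProduct_mulVec_adjMatrix_add_smul_single_sub_single {i j : V} (hij : ¬G.Adj i j)
    (x : V → ℝ) (t : ℝ) :
    (x + t • (Pi.single i 1 - Pi.single j 1)) ⬝ᵥ G.adjMatrix ℝ *ᵥ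
        (x + t • (Pi.single i 1 - Pi.single j 1)) =
      x ⬝ᵥ G.adjMatrix ℝ *ᵥ x + 2 * t * ((G.adjMatrix ℝ *ᵥ x) i - (G.adjMatrix ℝ *ᵥ x) j) := by
  set u : V → ℝ := Pi.single i 1 - Pi.single j 1
  have hxu : x ⬝ᵥ G.adjMatrix ℝ *ᵥ u = u ⬝ᵥ G.adjMatrix ℝ *ᵥ x := by
    rw [dotProduct_mulVec, ← mulVec_transpose, transpose_adjMatrix, dotProduct_comm]
  have hux : u ⬝ᵥ G.adjMatrix ℝ *ᵥ x = (G.adjMatrix ℝ *ᵥ x) i - (G.adjMatrix ℝ *ᵥ x) j := by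
    simp [u, sub_dotProduct]
  have huu : u ⬝ᵥ G.adjMatrix ℝ *ᵥ u = 0 := by
    simp [u, sub_dotProduct, mulVec_sub, hij, G.adj_comm j i]
  simp only [mulVec_add, mulVec_smul, dotProduct_add, add_dotProduct, dotProduct_smul,
    smul_dotProduct, smul_eq_mul, hxu, hux, huu]
  ring

lemma exists_le_dotProduct_mulVec_adjMatrix_of_not_isClique {s : Finset V}
    (hs : ¬G.IsClique (s : Set V)) {x : V → ℝ} (hx : 0 ≤ x) (hxs : ∀ i ∉ s, x i = 0) :
    ∃ t ⊂ s, ∃ y : V → ℝ, 0 ≤ y ∧ (∀ i ∉ t, y i = 0) ∧ ∑ i, y i = ∑ i, x i ∧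
      x ⬝ᵥ G.adjMatrix ℝ *ᵥ x ≤ y ⬝ᵥ G.adjMatrix ℝ *ᵥ y := by
  obtain ⟨i, hi, j, hj, hne, hij⟩ : ∃ i ∈ s, ∃ j ∈ s, i ≠ j ∧ ¬G.Adj i j := by
    simpa [isClique_iff, Set.Pairwise] using hs
  wlog hle : (G.adjMatrix ℝ *ᵥ x) j ≤ (G.adjMatrix ℝ *ᵥ x) i generalizing i j
  · exact this j hj i hi hne.symm (fun h => hij h.symm) (le_of_not_ge hle)
  set y := x + x j • (Pi.single i 1 - Pi.single j 1)
  have hy (k : V) : y k = if k = j then 0 else if k = i then x i + x j else x k := by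
    by_cases hkj : k = j <;> by_cases hki : k = i <;> simp [y, hki, hkj, hne]
  refine ⟨s.erase j, erase_ssubset hj, y, fun k => ?_, fun k hk => ?_, ?_, ?_⟩
  · rw [hy]
    split_ifs
    exacts [le_rfl, add_nonneg (hx i) (hx j), hx k]
  · rw [hy]
    split_ifs with hkj hki
    · rfl
    · exact absurd (mem_erase.2 ⟨hki ▸ hne, hki ▸ hi⟩) hk
    · exact hxs k fun h => hk (mem_erase.2 ⟨hkj, h⟩)
  · simp [y, sum_add_distrib, ← mul_sum, sum_sub_distrib]
  · rw [G.dotProduct_mulVec_adjMatrix_add_smul_single_sub_single hij]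
    have := mul_nonneg (hx j) (sub_nonneg.2 hle)
    linarith

theorem dotProduct_mulVec_adjMatrix_le_of_cliqueNum_le {k : ℕ} (hk : G.cliqueNum ≤ k)
    {x : V → ℝ} (hx : 0 ≤ x) :
    x ⬝ᵥ G.adjMatrix ℝ *ᵥ x ≤ (1 - 1 / k) * (∑ i, x i) ^ 2 := by
  suffices ∀ s : Finset V, ∀ x : V → ℝ, 0 ≤ x → (∀ i ∉ s, x i = 0) →
      x ⬝ᵥ G.adjMatrix ℝ *ᵥ x ≤ (1 - 1 / k) * (∑ i, x i) ^ 2 from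
    this univ x hx fun i hi => absurd (mem_univ i) hi
  intro s
  induction s using Finset.strongInduction with
  | H s ih =>
    intro x hx hxs
    by_cases hs : G.IsClique (s : Set V)
    · exact G.dotProduct_mulVec_adjMatrix_le_of_card_le (hs.card_le_cliqueNum.trans hk) hx hxs
    · obtain ⟨t, hts, y, hy, hyt, hsum, hxy⟩ :=
        G.exists_le_dotProduct_mulVec_adjMatrix_of_not_isClique hs hx hxs
      exact hxy.trans (hsum ▸ ih t hts y hy hyt)

theorem eigenvalues_adjMatrix_le_of_cliqueNum_le (hA : (G.adjMatrix ℝ).IsHermitian) {k : ℕ}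
    (hk : G.cliqueNum ≤ k) (i : V) :
    hA.eigenvalues i ≤ (1 - 1 / k) * Fintype.card V := by
  set v : V → ℝ := ⇑(hA.eigenvectorBasis i)
  have hv : ∑ j, v j ^ 2 = 1 := by
    rw [← EuclideanSpace.real_norm_sq_eq, (hA.eigenvectorBasis).orthonormal.1 i, one_pow]
  have hk₀ := Nat.one_sub_one_div_cast_nonneg (α := ℝ) k
  calc hA.eigenvalues i = v ⬝ᵥ G.adjMatrix ℝ *ᵥ v := by simp [hA.eigenvalues_eq, v]
    _ ≤ |v| ⬝ᵥ G.adjMatrix ℝ *ᵥ |v| := G.dotProduct_mulVec_adjMatrix_le_abs v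
    _ ≤ (1 - 1 / k) * (∑ j, |v j|) ^ 2 :=
      G.dotProduct_mulVec_adjMatrix_le_of_cliqueNum_le hk (abs_nonneg v)
    _ ≤ (1 - 1 / k) * (Fintype.card V * ∑ j, |v j| ^ 2) := by
      gcongr
      exact sq_sum_le_card_mul_sum_sq
    _ = (1 - 1 / k) * Fintype.card V := by simp [sq_abs, hv]

end Lagrangian

end SimpleGraph

theorem adjSpectralRadius_le_of_cliqueNum_le {n : ℕ} (G : SimpleGraph (Fin n)) {k : ℕ}
    (hk : G.cliqueNum ≤ k) : adjSpectralRadius G ≤ (1 - 1 / k) * n := by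
  classical
  refine Real.iSup_le (fun i => ?_) (mul_nonneg (Nat.one_sub_one_div_cast_nonneg k) n.cast_nonneg)
  simpa using G.eigenvalues_adjMatrix_le_of_cliqueNum_le (adjMatrix_isHermitian G) hk i

/-- **Wilf's theorem.** For every graph `G` on `n` vertices,
`λ(G) ≤ (1 − 1/ω(G))·n`; equivalently, if `G` is `K_{r+1}`-free then
`λ(G) ≤ (1 − 1/r)·n`. -/
theorem wilf (n : ℕ) (G : SimpleGraph (Fin n)) :
    adjSpectralRadius G ≤ (1 - 1 / (G.cliqueNum : ℝ)) * n ∧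
      ∀ r : ℕ, 1 ≤ r → ¬ HasSubgraphCopy (SimpleGraph.completeGraph (Fin (r + 1))) G →
        adjSpectralRadius G ≤ (1 - 1 / (r : ℝ)) * n :=
  ⟨adjSpectralRadius_le_of_cliqueNum_le G le_rfl, fun _ _ h =>
    adjSpectralRadius_le_of_cliqueNum_le G (G.cliqueNum_le_of_not_hasSubgraphCopy h)⟩
end

section
/- Let r ≥ 2. If G is a finite simple graph on n vertices containing no subgraph isomorphic to K_{r+1}, then q(G) ≤ 2·(1 − 1/r)·n, where q(G) is the signless Laplacian spectral radius of G. -/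
lemma signlessLap_isHermitian {n : ℕ} (G : SimpleGraph (Fin n)) [DecidableRel G.Adj] :
    (Matrix.diagonal (fun v => (G.degree v : ℝ)) + G.adjMatrix ℝ).IsHermitian :=
  (Matrix.isHermitian_diagonal _).add (adjMatrix_isHermitian G)

/-- the signless Laplacian spectral radius of `G`: the largest eigenvalue of
`Q(G) = D(G) + A(G)` -/
noncomputable def qSpectralRadius {n : ℕ} (G : SimpleGraph (Fin n)) : ℝ :=
  letI := Classical.decRel G.Adj
  ⨆ i, (signlessLap_isHermitian G).eigenvalues i

/-!
Let `x` be a unit eigenvector of `Q = Q(G)` and `y = |x|`. Since `Q` is entrywise nonnegative,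
`q(G) = xᵀQx ≤ yᵀQy = ∑ d(v) y_v² + ∑_{u ∼ v} y_u y_v`, the last sum over ordered adjacent pairs.
By the Motzkin–Straus inequality that sum is at most `c (∑ y_v)²`, where `c = 1 - 1/r`.
Put `D(v) = 2cn - d(v) > 0`. Cauchy–Schwarz gives `(∑ y_v)² ≤ (∑ D(v) y_v²)(∑ 1/D(v))`, and the
Caro–Wei bound `∑ 1/(n - d(v)) ≤ r`, pushed through the concave map `t ↦ 1/((1 - 2/r)n + 1/t)`,
gives `∑ 1/D(v) ≤ 1/c`. Hence `yᵀQy ≤ ∑ (d(v) + D(v)) y_v² = 2cn`.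
-/

open Finset Matrix

/-- The right-hand side is the tangent line at `m₀⁻¹` of the concave map `t ↦ (b + t⁻¹)⁻¹`,
evaluated at `m⁻¹`. -/
lemma inv_add_le_tangent {b m m₀ : ℝ} (hb : 0 ≤ b) (hm : 0 < m) (hm₀ : 0 < m₀) :
    (b + m)⁻¹ ≤ (b + m₀)⁻¹ + (m⁻¹ - m₀⁻¹) * (m₀ / (b + m₀)) ^ 2 := by
  have key : (b + m₀)⁻¹ + (m⁻¹ - m₀⁻¹) * (m₀ / (b + m₀)) ^ 2 - (b + m)⁻¹ =
      b * (m - m₀) ^ 2 / (m * (b + m) * (b + m₀) ^ 2) := by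
    field_simp
    ring
  have : 0 ≤ b * (m - m₀) ^ 2 / (m * (b + m) * (b + m₀) ^ 2) := by positivity
  linarith

lemma motzkinStraus_step {k σ s : ℝ} (hk : 0 < k) :
    (1 - 1 / k) * σ ^ 2 + 2 * (s - σ) * σ ≤ (1 - 1 / (k + 1)) * s ^ 2 := by
  have key : (1 - 1 / (k + 1)) * s ^ 2 - ((1 - 1 / k) * σ ^ 2 + 2 * (s - σ) * σ) =
      ((k + 1) * σ - k * s) ^ 2 / (k * (k + 1)) := by
    field_simp
    ring
  have : 0 ≤ ((k + 1) * σ - k * s) ^ 2 / (k * (k + 1)) := by positivity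
  linarith

lemma Matrix.dotProduct_mulVec_le_abs {ι : Type*} [Fintype ι] {A : Matrix ι ι ℝ}
    (hA : ∀ i j, 0 ≤ A i j) (x : ι → ℝ) : x ⬝ᵥ A *ᵥ x ≤ |x| ⬝ᵥ A *ᵥ |x| := by
  simp only [dotProduct, mulVec, mul_sum, Pi.abs_apply]
  refine sum_le_sum fun i _ => sum_le_sum fun j _ => ?_
  calc x i * (A i j * x j) ≤ |x i * (A i j * x j)| := le_abs_self _
    _ = |x i| * (A i j * |x j|) := by rw [abs_mul, abs_mul, abs_of_nonneg (hA i j)]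

theorem Matrix.IsHermitian.eigenvalues_le_of_entrywise_nonneg {ι : Type*} [Fintype ι]
    [DecidableEq ι] {A : Matrix ι ι ℝ} (hA : A.IsHermitian) (hA0 : ∀ i j, 0 ≤ A i j) {M : ℝ}
    (hM : ∀ y : ι → ℝ, (∀ i, 0 ≤ y i) → y ⬝ᵥ A *ᵥ y ≤ M * (y ⬝ᵥ y)) (i : ι) :
    hA.eigenvalues i ≤ M := by
  set x : ι → ℝ := ⇑(hA.eigenvectorBasis i)
  have hx : |x| ⬝ᵥ |x| = 1 := by
    have h := EuclideanSpace.inner_eq_star_dotProduct (hA.eigenvectorBasis i)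
      (hA.eigenvectorBasis i)
    rw [real_inner_self_eq_norm_sq, hA.eigenvectorBasis.orthonormal.1 i] at h
    simp only [dotProduct, Pi.abs_apply, abs_mul_abs_self]
    simpa [dotProduct] using h.symm
  have heig := hA.eigenvalues_eq i
  simp only [star_trivial, RCLike.re_to_real] at heig
  calc hA.eigenvalues i = x ⬝ᵥ A *ᵥ x := heig
    _ ≤ |x| ⬝ᵥ A *ᵥ |x| := dotProduct_mulVec_le_abs hA0 x
    _ ≤ M := by simpa [hx] using hM |x| fun j => abs_nonneg (x j)

namespace SimpleGraph

variable {V : Type*} {G : SimpleGraph V}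

lemma cliqueFree_of_not_hasSubgraphCopy {k : ℕ}
    (h : ¬HasSubgraphCopy (completeGraph (Fin k)) G) : G.CliqueFree k := by
  by_contra hG
  obtain ⟨f⟩ := (not_cliqueFree_iff_top_isContained k).1 hG
  exact h ⟨f.toHom, f.injective'⟩

variable [DecidableRel G.Adj]

lemma CliqueFreeOn.filter_adj {S : Finset V} {k : ℕ} {w : V} (hS : G.CliqueFreeOn S (k + 1))
    (hw : w ∈ S) : G.CliqueFreeOn ↑{v ∈ S | G.Adj w v} k := by
  convert hS.of_succ G hw using 1
  ext v
  simp

lemma sum_mul_sum_adj_comm (y : V → ℝ) (X Y : Finset V) :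
    ∑ v ∈ X, y v * ∑ u ∈ Y with G.Adj v u, y u = ∑ u ∈ Y, y u * ∑ v ∈ X with G.Adj u v, y v := by
  simp only [sum_filter, mul_sum]
  rw [sum_comm]
  refine sum_congr rfl fun u _ => sum_congr rfl fun v _ => ?_
  simp only [G.adj_comm u v]
  split_ifs <;> ring

/-- **Motzkin–Straus inequality.** Induction on the clique bound: a vertex `w` maximising
`∑ u ∈ S with G.Adj v u, y u` splits `S` into its neighbours, on which the clique bound drops by
one, and its non-neighbours, whose rows each sum to at most that of `w`. -/
theorem sum_mul_sum_adj_le {k : ℕ} (hk : 1 ≤ k) {S : Finset V} (hS : G.CliqueFreeOn S (k + 1))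
    {y : V → ℝ} (hy : ∀ v, 0 ≤ y v) :
    ∑ v ∈ S, y v * ∑ u ∈ S with G.Adj v u, y u ≤ (1 - 1 / (k : ℝ)) * (∑ v ∈ S, y v) ^ 2 := by
  induction k, hk using Nat.le_induction generalizing S with
  | base =>
    have hpair := (cliqueFreeOn_two (G := G)).1 hS
    have hempty : ∀ v ∈ S, {u ∈ S | G.Adj v u} = ∅ := fun v hv =>
      filter_false_of_mem fun u hu huv => hpair hv hu (G.ne_of_adj huv) huv
    rw [sum_eq_zero fun v hv => by rw [hempty v hv, sum_empty, mul_zero]]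
    simp
  | succ k hk ih =>
    set W := fun v => ∑ u ∈ S with G.Adj v u, y u
    rcases S.eq_empty_or_nonempty with rfl | hne
    · simp
    obtain ⟨w, hw, hmax⟩ := S.exists_max_image W hne
    set S' := {v ∈ S | G.Adj w v}
    set A := {v ∈ S | ¬G.Adj w v}
    have hsum : ∑ v ∈ A, y v = ∑ v ∈ S, y v - ∑ v ∈ S', y v := by
      rw [← sum_filter_add_sum_filter_not S (G.Adj w)]; ring
    have hA : ∑ v ∈ A, y v * W v ≤ (∑ v ∈ S, y v - ∑ v ∈ S', y v) * ∑ v ∈ S', y v := by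
      rw [← hsum, sum_mul]
      exact sum_le_sum fun v hv => mul_le_mul_of_nonneg_left (hmax v (filter_subset _ _ hv)) (hy v)
    have hcross : ∑ v ∈ S', y v * ∑ u ∈ A with G.Adj v u, y u ≤ ∑ v ∈ A, y v * W v := by
      rw [sum_mul_sum_adj_comm]
      refine sum_le_sum fun u _ => mul_le_mul_of_nonneg_left ?_ (hy u)
      exact sum_le_sum_of_subset_of_nonneg (filter_subset_filter _ (filter_subset _ _))
        fun v _ _ => hy v
    have hS' : ∑ v ∈ S', y v * W v =
        ∑ v ∈ S', y v * ∑ u ∈ S' with G.Adj v u, y u +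
          ∑ v ∈ S', y v * ∑ u ∈ A with G.Adj v u, y u := by
      rw [← sum_add_distrib]
      refine sum_congr rfl fun v _ => ?_
      simp only [W, ← mul_add]
      congr 1
      rw [← sum_filter_add_sum_filter_not _ (G.Adj w)]
      congr 2 <;> ext u <;> simp only [S', A, mem_filter] <;> tauto
    have hind := ih (hS.filter_adj hw)
    calc ∑ v ∈ S, y v * W v = ∑ v ∈ S', y v * W v + ∑ v ∈ A, y v * W v :=
          (sum_filter_add_sum_filter_not S (G.Adj w) _).symm
      _ ≤ (1 - 1 / (k : ℝ)) * (∑ v ∈ S', y v) ^ 2 +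
            2 * (∑ v ∈ S, y v - ∑ v ∈ S', y v) * ∑ v ∈ S', y v := by
          rw [hS']; linarith
      _ ≤ (1 - 1 / ((k + 1 : ℕ) : ℝ)) * (∑ v ∈ S, y v) ^ 2 := by
          push_cast
          exact motzkinStraus_step (by exact_mod_cast hk)

variable [Fintype V] [DecidableEq V]

lemma degree_add_card_le_of_forall_not_adj {w : V} {A : Finset V} (hA : ∀ v ∈ A, ¬G.Adj w v) :
    G.degree w + #A ≤ Fintype.card V := by
  rw [← card_neighborFinset_eq_degree, ← card_union_of_disjoint]
  · exact card_le_univ _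
  · exact Finset.disjoint_left.2 fun v hv hvA => hA v hvA ((mem_neighborFinset G w v).1 hv)

/-- **Caro–Wei bound**, in its clique form. -/
theorem sum_inv_card_sub_degree_le {k : ℕ} {S : Finset V} (hS : G.CliqueFreeOn S (k + 1)) :
    ∑ v ∈ S, ((Fintype.card V : ℝ) - G.degree v)⁻¹ ≤ k := by
  induction k generalizing S with
  | zero =>
    have : S = ∅ := eq_empty_of_forall_notMem fun v hv =>
      lt_irrefl 1 <| (cliqueFreeOn_singleton G).1 (CliqueFreeOn.subset G (by simpa using hv) hS)
    simp [this]
  | succ k ih =>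
    rcases S.eq_empty_or_nonempty with rfl | hne
    · simp only [sum_empty]; positivity
    obtain ⟨w, hw, hmax⟩ := S.exists_max_image (G.degree ·) hne
    set A := {v ∈ S | ¬G.Adj w v}
    have hA : ∑ v ∈ A, ((Fintype.card V : ℝ) - G.degree v)⁻¹ ≤ 1 := by
      have hAw : (0 : ℝ) < #A := by
        exact_mod_cast card_pos.2 ⟨w, mem_filter.2 ⟨hw, G.irrefl⟩⟩
      have hdeg := degree_add_card_le_of_forall_not_adj (G := G) (A := A) fun v hv =>
        (mem_filter.1 hv).2
      calc ∑ v ∈ A, ((Fintype.card V : ℝ) - G.degree v)⁻¹ ≤ ∑ _v ∈ A, (#A : ℝ)⁻¹ := by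
            refine sum_le_sum fun v hv => inv_anti₀ hAw ?_
            have hle := hmax v (mem_filter.1 hv).1
            rw [le_sub_iff_add_le']
            exact_mod_cast (Nat.add_le_add_right hle _).trans hdeg
        _ = 1 := by rw [sum_const, nsmul_eq_mul, mul_inv_cancel₀ hAw.ne']
    rw [← sum_filter_add_sum_filter_not S (G.Adj w)]
    push_cast
    linarith [ih (hS.filter_adj hw)]

theorem sum_inv_two_mul_card_sub_degree_le {r : ℕ} (hr : 2 ≤ r) (hG : G.CliqueFree (r + 1)) :
    ∑ v, (2 * (1 - 1 / (r : ℝ)) * Fintype.card V - G.degree v)⁻¹ ≤ r / (r - 1) := by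
  have hr' : (2 : ℝ) ≤ r := by exact_mod_cast hr
  rcases isEmpty_or_nonempty V with hV | hV
  · simp only [univ_eq_empty, sum_empty]
    exact div_nonneg (by linarith) (by linarith)
  set n : ℝ := (Fintype.card V : ℝ)
  have hn : 0 < n := by positivity
  have hdeg : ∀ v, 0 < n - G.degree v := fun v => by
    simpa [n] using (G.degree_lt_card_verts v)
  have hcw := sum_inv_card_sub_degree_le (G := G) (S := univ) (by simpa using hG)
  -- `n / r` is the value of `n - d(v)` in the Turán graph, where equality holds.
  have htangent : ∀ v, (2 * (1 - 1 / (r : ℝ)) * n - G.degree v)⁻¹ ≤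
      r / ((r - 1) * n) + ((n - G.degree v)⁻¹ - r / n) / (r - 1) ^ 2 := fun v => by
    have := inv_add_le_tangent (b := (1 - 2 / r) * n) (m₀ := n / r)
      (mul_nonneg (by rw [sub_nonneg, div_le_one] <;> linarith) hn.le) (hdeg v) (by positivity)
    convert this using 2
    · ring
    · field_simp; ring
    · field_simp; ring
  calc ∑ v, (2 * (1 - 1 / (r : ℝ)) * n - G.degree v)⁻¹
      ≤ ∑ v, (r / ((r - 1) * n) + ((n - G.degree v)⁻¹ - r / n) / (r - 1) ^ 2) :=
        sum_le_sum fun v _ => htangent v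
    _ = r / (r - 1) + (∑ v, (n - G.degree v)⁻¹ - r) / (r - 1) ^ 2 := by
        rw [sum_add_distrib, ← sum_div, ← sum_div, sum_sub_distrib]
        simp only [sum_const, card_univ, nsmul_eq_mul]
        field_simp
        ring
    _ ≤ r / (r - 1) := by
        have : (∑ v, (n - G.degree v)⁻¹ - r) / (r - 1) ^ 2 ≤ 0 :=
          div_nonpos_of_nonpos_of_nonneg (by linarith) (sq_nonneg _)
        linarith

variable (G)

def signlessLapMatrix : Matrix V V ℝ := diagonal (fun v => (G.degree v : ℝ)) + G.adjMatrix ℝ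

lemma signlessLapMatrix_nonneg (v u : V) : 0 ≤ G.signlessLapMatrix v u := by
  simp only [signlessLapMatrix, Matrix.add_apply, diagonal_apply, adjMatrix_apply]
  split_ifs <;> positivity

lemma dotProduct_signlessLapMatrix_mulVec (y : V → ℝ) :
    y ⬝ᵥ G.signlessLapMatrix *ᵥ y =
      ∑ v, G.degree v * y v ^ 2 + ∑ v, y v * ∑ u with G.Adj v u, y u := by
  rw [signlessLapMatrix, add_mulVec, dotProduct_add]
  simp only [dotProduct, mulVec_diagonal, adjMatrix_mulVec_apply, neighborFinset_eq_filter]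
  congr 1
  exact sum_congr rfl fun v _ => by ring

variable {G}

theorem dotProduct_signlessLapMatrix_mulVec_le {r : ℕ} (hr : 2 ≤ r) (hG : G.CliqueFree (r + 1))
    {y : V → ℝ} (hy : ∀ v, 0 ≤ y v) :
    y ⬝ᵥ G.signlessLapMatrix *ᵥ y ≤ 2 * (1 - 1 / (r : ℝ)) * Fintype.card V * (y ⬝ᵥ y) := by
  have hr' : (2 : ℝ) ≤ r := by exact_mod_cast hr
  set c : ℝ := 1 - 1 / r
  set n : ℝ := (Fintype.card V : ℝ)
  set D : V → ℝ := fun v => 2 * c * n - G.degree v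
  have hc : 1 ≤ 2 * c := by
    simp only [c]
    rw [mul_sub, mul_one_div, le_sub_comm, div_le_iff₀ (by linarith)]
    linarith
  have hD : ∀ v, 0 < D v := fun v => by
    have hdeg : (G.degree v : ℝ) < n := by simp only [n]; exact_mod_cast G.degree_lt_card_verts v
    simp only [D]
    nlinarith
  have hMS := sum_mul_sum_adj_le (by omega) (S := univ) hG.cliqueFreeOn hy
  have hCS : (∑ v, y v) ^ 2 ≤ (∑ v, D v * y v ^ 2) * ∑ v, (D v)⁻¹ :=
    sum_sq_le_sum_mul_sum_of_sq_le_mul univ (fun v _ => mul_nonneg (hD v).le (sq_nonneg _))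
      (fun v _ => (inv_pos.2 (hD v)).le)
      (fun v _ => by rw [mul_comm (D v), mul_assoc, mul_inv_cancel₀ (hD v).ne', mul_one])
  have hCW : ∑ v, (D v)⁻¹ ≤ r / (r - 1) := sum_inv_two_mul_card_sub_degree_le hr hG
  have hcr : c * (r / (r - 1)) = 1 := by
    simp only [c]
    field_simp
    exact div_self (by linarith)
  have hcCS : c * (∑ v, y v) ^ 2 ≤ ∑ v, D v * y v ^ 2 := calc
    c * (∑ v, y v) ^ 2 ≤ c * ((∑ v, D v * y v ^ 2) * (r / (r - 1))) := by
      refine mul_le_mul_of_nonneg_left ?_ (by linarith)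
      exact hCS.trans (mul_le_mul_of_nonneg_left hCW (sum_nonneg fun v _ =>
        mul_nonneg (hD v).le (sq_nonneg _)))
    _ = ∑ v, D v * y v ^ 2 := by rw [mul_left_comm, hcr, mul_one]
  rw [dotProduct_signlessLapMatrix_mulVec]
  have hsplit : ∑ v, G.degree v * y v ^ 2 + ∑ v, D v * y v ^ 2 = 2 * c * n * (y ⬝ᵥ y) := by
    rw [← sum_add_distrib, dotProduct, mul_sum]
    exact sum_congr rfl fun v _ => by simp only [D]; ring
  linarith

end SimpleGraph

/-- **Abreu–Nikiforov theorem.** For `r ≥ 2`, if `G` is an `n`-vertex graph with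
no copy of `K_{r+1}`, then `q(G) ≤ 2(1 − 1/r)·n`. -/
theorem abreu_nikiforov (n r : ℕ) (hr : 2 ≤ r) (G : SimpleGraph (Fin n))
    (hfree : ¬ HasSubgraphCopy (SimpleGraph.completeGraph (Fin (r + 1))) G) :
    qSpectralRadius G ≤ 2 * (1 - 1 / (r : ℝ)) * n := by
  classical
  have hG := SimpleGraph.cliqueFree_of_not_hasSubgraphCopy hfree
  have hbound : 0 ≤ 2 * (1 - 1 / (r : ℝ)) * n := by
    have : 1 / (r : ℝ) ≤ 1 := by
      rw [div_le_one (by positivity)]; exact_mod_cast (by omega : 1 ≤ r)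
    have : (0 : ℝ) ≤ 1 - 1 / r := by linarith
    positivity
  refine Real.iSup_le (fun i => ?_) hbound
  refine (signlessLap_isHermitian G).eigenvalues_le_of_entrywise_nonneg G.signlessLapMatrix_nonneg
    (fun y hy => ?_) i
  have := G.dotProduct_signlessLapMatrix_mulVec_le hr hG hy
  rwa [Fintype.card_fin] at this
end

section
/- Let t ≥ s ≥ 2 be integers. If G is a finite simple graph on n vertices containing no subgraph isomorphic to the complete bipartite graph K_{s,t}, then e(G) ≤ ½·(t−1)^{1/s}·n^{2−1/s} + ½·(s−1)·n. -/
open Finset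

lemma kst_descFactorial_ge (d s : ℕ) : ∀ k, k ≤ s → (d + 1 - s) ^ k ≤ d.descFactorial k := by
  intro k hk
  induction k with
  | zero => simp
  | succ k ih =>
    rw [Nat.descFactorial_succ, pow_succ, mul_comm]
    exact Nat.mul_le_mul (by omega) (ih (by omega))

lemma kst_count (s t n : ℕ) (ht : 1 ≤ t)
    (G : SimpleGraph (Fin n)) [DecidableRel G.Adj]
    (hfree : ¬ HasSubgraphCopy (completeBipartiteGraph (Fin s) (Fin t)) G) :
    ∑ v : Fin n, (G.degree v).choose s ≤ (t - 1) * n.choose s := by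
  classical
  have h1 : ∀ v : Fin n, (G.degree v).choose s
      = ((univ.powersetCard s).filter (· ⊆ G.neighborFinset v)).card := by
    intro v
    have : (univ.powersetCard s).filter (· ⊆ G.neighborFinset v)
        = (G.neighborFinset v).powersetCard s := by
      ext S
      simp only [mem_filter, mem_powersetCard]
      constructor
      · rintro ⟨⟨-, h2⟩, h3⟩; exact ⟨h3, h2⟩
      · rintro ⟨h2, h3⟩; exact ⟨⟨subset_univ S, h3⟩, h2⟩
    rw [this, card_powersetCard, SimpleGraph.card_neighborFinset_eq_degree]
  have h2 : ∀ S ∈ univ.powersetCard s,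
      (univ.filter (fun v : Fin n => S ⊆ G.neighborFinset v)).card ≤ t - 1 := by
    intro S hS
    rw [mem_powersetCard] at hS
    by_contra h
    have hT : t ≤ (univ.filter (fun v : Fin n => S ⊆ G.neighborFinset v)).card := by omega
    obtain ⟨T, hTsub, hTcard⟩ := exists_subset_card_eq hT
    apply hfree
    have eS : Fin s ≃ S := (finCongr hS.2.symm).trans S.equivFin.symm
    have eT : Fin t ≃ T := (finCongr hTcard.symm).trans T.equivFin.symm
    have hadj : ∀ (i : Fin s) (j : Fin t), G.Adj (eS i : Fin n) (eT j : Fin n) := by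
      intro i j
      have hj := hTsub (eT j).2
      rw [mem_filter] at hj
      have := hj.2 (eS i).2
      rw [SimpleGraph.mem_neighborFinset] at this
      exact this.symm
    refine ⟨⟨Sum.elim (fun i => (eS i : Fin n)) (fun j => (eT j : Fin n)), ?_⟩, ?_⟩
    · rintro (i | i) (j | j) hab <;>
        simp only [completeBipartiteGraph_adj, Sum.isLeft_inl, Sum.isRight_inr,
          Sum.isLeft_inr, Sum.isRight_inl] at hab
      · simp at hab
      · exact hadj i j
      · exact (hadj j i).symm
      · simp at hab
    · have hdisj : ∀ (i : Fin s) (j : Fin t), ((eS i : Fin n)) ≠ ((eT j : Fin n)) := by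
        intro i j hij
        have hj := hTsub (eT j).2
        rw [mem_filter] at hj
        have hmem := hj.2 (hij ▸ (eS i).2)
        rw [SimpleGraph.mem_neighborFinset] at hmem
        exact G.irrefl hmem
      rintro (i | i) (j | j) hij
      · have : eS i = eS j := Subtype.ext hij
        rw [eS.injective this]
      · exact absurd hij (hdisj i j)
      · exact absurd hij.symm (hdisj j i)
      · have : eT i = eT j := Subtype.ext hij
        rw [eT.injective this]
  calc ∑ v : Fin n, (G.degree v).choose s
      = ∑ v : Fin n, ((univ.powersetCard s).filter (· ⊆ G.neighborFinset v)).card := by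
        simp_rw [h1]
    _ = ∑ S ∈ univ.powersetCard s,
          (univ.filter (fun v : Fin n => S ⊆ G.neighborFinset v)).card := by
        simp only [card_filter]; exact Finset.sum_comm
    _ ≤ ∑ _S ∈ univ.powersetCard s, (t - 1) := Finset.sum_le_sum h2
    _ = (t - 1) * n.choose s := by
        rw [Finset.sum_const, smul_eq_mul, card_powersetCard, card_univ, Fintype.card_fin,
          mul_comm]

/-- **Kővári–Sós–Turán theorem.** For `t ≥ s ≥ 2`, if `G` is an `n`-vertex graph
with no copy of `K_{s,t}`, then
`e(G) ≤ ½(t−1)^{1/s} n^{2−1/s} + ½(s−1)n`. -/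
theorem kovari_sos_turan (s t n : ℕ) (hs : 2 ≤ s) (hst : s ≤ t)
    (G : SimpleGraph (Fin n)) [DecidableRel G.Adj]
    (hfree : ¬ HasSubgraphCopy (completeBipartiteGraph (Fin s) (Fin t)) G) :
    (G.edgeFinset.card : ℝ) ≤
      1 / 2 * ((t : ℝ) - 1) ^ ((1 : ℝ) / (s : ℝ)) * (n : ℝ) ^ ((2 : ℝ) - 1 / (s : ℝ))
        + 1 / 2 * ((s : ℝ) - 1) * (n : ℝ) := by
  classical
  have hs1 : (1:ℝ) ≤ (s:ℝ) := by exact_mod_cast Nat.one_le_of_lt hs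
  have hsne : (s:ℝ) ≠ 0 := by positivity
  have ht1 : (1:ℝ) ≤ (t:ℝ) := by exact_mod_cast le_trans (Nat.one_le_of_lt hs) hst
  rcases Nat.eq_zero_or_pos n with rfl | hn
  · have he : G.edgeFinset = ∅ := Finset.eq_empty_of_isEmpty _
    rw [he]
    simp only [Finset.card_empty, Nat.cast_zero, Nat.cast_ofNat]
    rw [Real.zero_rpow (by
      have : 1 / (s:ℝ) ≤ 1 := by
        rw [div_le_one (by linarith)]; linarith
      intro h; nlinarith)]
    norm_num
  -- the ℕ-level key inequality
  have key_nat : ∑ v : Fin n, (G.degree v + 1 - s) ^ s ≤ (t - 1) * n ^ s := by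
    calc ∑ v : Fin n, (G.degree v + 1 - s) ^ s
        ≤ ∑ v : Fin n, (G.degree v).descFactorial s :=
          Finset.sum_le_sum fun v _ => kst_descFactorial_ge _ s s le_rfl
      _ = ∑ v : Fin n, s.factorial * (G.degree v).choose s := by
          simp_rw [Nat.descFactorial_eq_factorial_mul_choose]
      _ = s.factorial * ∑ v : Fin n, (G.degree v).choose s := by rw [Finset.mul_sum]
      _ ≤ s.factorial * ((t - 1) * n.choose s) :=
          Nat.mul_le_mul_left _ (kst_count s t n (le_trans (by omega) hst) G hfree)
      _ = (t - 1) * (s.factorial * n.choose s) := by ring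
      _ = (t - 1) * n.descFactorial s := by rw [Nat.descFactorial_eq_factorial_mul_choose]
      _ ≤ (t - 1) * n ^ s := Nat.mul_le_mul_left _ (Nat.descFactorial_le_pow n s)
  set x : Fin n → ℝ := fun v => ((G.degree v + 1 - s : ℕ) : ℝ) with hxdef
  set X := ∑ v : Fin n, x v with hXdef
  have hXnn : 0 ≤ X := Finset.sum_nonneg fun v _ => Nat.cast_nonneg _
  have hsum_pow : ∑ v : Fin n, (x v) ^ s ≤ ((t:ℝ) - 1) * (n:ℝ) ^ s := by
    have := key_nat
    have hcast : ((∑ v : Fin n, (G.degree v + 1 - s) ^ s : ℕ) : ℝ)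
        ≤ (((t - 1) * n ^ s : ℕ) : ℝ) := by exact_mod_cast this
    push_cast [Nat.cast_sub (le_trans (by omega : 1 ≤ s) hst)] at hcast
    exact hcast
  obtain ⟨m, rfl⟩ : ∃ m, s = m + 1 := ⟨s - 1, by omega⟩
  have hmean : X ^ (m + 1) / (n:ℝ) ^ m ≤ ∑ v : Fin n, (x v) ^ (m + 1) := by
    have := pow_sum_div_card_le_sum_pow (s := (univ : Finset (Fin n))) (f := x)
      (fun i _ => Nat.cast_nonneg _) m
    simpa [card_univ] using this
  have hnpos : (0:ℝ) < (n:ℝ) := by exact_mod_cast hn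
  have hpow : X ^ (m + 1) ≤ ((t:ℝ) - 1) * (n:ℝ) ^ (2 * m + 1) := by
    have h1 : X ^ (m + 1) ≤ (∑ v : Fin n, (x v) ^ (m + 1)) * (n:ℝ) ^ m := by
      rw [div_le_iff₀ (by positivity)] at hmean; exact hmean
    calc X ^ (m + 1) ≤ (((t:ℝ) - 1) * (n:ℝ) ^ (m + 1)) * (n:ℝ) ^ m :=
          h1.trans (mul_le_mul_of_nonneg_right hsum_pow (by positivity))
      _ = ((t:ℝ) - 1) * (n:ℝ) ^ (2 * m + 1) := by rw [mul_assoc, ← pow_add]; ring_nf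
  have htnn : (0:ℝ) ≤ (t:ℝ) - 1 := by linarith
  have hX : X ≤ ((t:ℝ) - 1) ^ ((1:ℝ) / ((m:ℝ) + 1)) * (n:ℝ) ^ ((2:ℝ) - 1 / ((m:ℝ) + 1)) := by
    have hmne : ((m:ℝ) + 1) ≠ 0 := by positivity
    have h1 : X = (X ^ (m + 1)) ^ ((1:ℝ) / ((m:ℝ) + 1)) := by
      rw [← Real.rpow_natCast X (m + 1), ← Real.rpow_mul hXnn]
      push_cast
      rw [mul_one_div, div_self hmne, Real.rpow_one]
    rw [h1]
    have h2 : (X ^ (m + 1)) ^ ((1:ℝ) / ((m:ℝ) + 1))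
        ≤ (((t:ℝ) - 1) * (n:ℝ) ^ (2 * m + 1)) ^ ((1:ℝ) / ((m:ℝ) + 1)) :=
      Real.rpow_le_rpow (by positivity) hpow (by positivity)
    refine h2.trans_eq ?_
    rw [Real.mul_rpow htnn (by positivity)]
    congr 1
    rw [← Real.rpow_natCast (n:ℝ) (2 * m + 1), ← Real.rpow_mul hnpos.le]
    congr 1
    push_cast
    field_simp
    ring
  have h2e : 2 * (G.edgeFinset.card : ℝ) ≤ X + ((m:ℝ) + 1 - 1) * (n:ℝ) := by
    have hdeg : ∀ v : Fin n, (G.degree v : ℝ) ≤ x v + ((m:ℝ) + 1 - 1) := by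
      intro v
      have : G.degree v ≤ (G.degree v + 1 - (m + 1)) + m := by omega
      have := (Nat.cast_le (α := ℝ)).2 this
      push_cast at this
      simpa [hxdef] using this
    have hsum : (∑ v : Fin n, (G.degree v : ℝ)) ≤ X + ((m:ℝ) + 1 - 1) * (n:ℝ) := by
      calc (∑ v : Fin n, (G.degree v : ℝ)) ≤ ∑ v : Fin n, (x v + ((m:ℝ) + 1 - 1)) :=
            Finset.sum_le_sum fun v _ => hdeg v
        _ = X + ((m:ℝ) + 1 - 1) * (n:ℝ) := by
            rw [Finset.sum_add_distrib, Finset.sum_const, card_univ, Fintype.card_fin,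
              nsmul_eq_mul, mul_comm]
    have hde : (∑ v : Fin n, (G.degree v : ℝ)) = 2 * (G.edgeFinset.card : ℝ) := by
      exact_mod_cast congrArg (Nat.cast (R := ℝ)) G.sum_degrees_eq_twice_card_edges
    linarith
  push_cast
  linarith
end

section
/- Let t ≥ s ≥ 2 be integers. For every integer n ≥ 2 there exists a finite simple graph G on n vertices that contains no subgraph isomorphic to K_{s,t} and has e(G) ≥ (1/16)·n^{2−(s+t−2)/(st−1)}. -/
open Finset

noncomputable section

namespace KstAux

abbrev Slot (n : ℕ) := {e : Sym2 (Fin n) // ¬ e.IsDiag}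

variable {n : ℕ}

/-- The random graph determined by a choice of edges. -/
def graphOf (ω : Slot n → Bool) : SimpleGraph (Fin n) :=
  SimpleGraph.fromEdgeSet {e | ∃ h : ¬ e.IsDiag, ω ⟨e, h⟩ = true}

lemma graphOf_adj {ω : Slot n → Bool} {a b : Fin n} (hab : a ≠ b) :
    (graphOf ω).Adj a b ↔ ω ⟨s(a, b), by simp [hab]⟩ = true := by
  simp only [graphOf, SimpleGraph.fromEdgeSet_adj, Set.mem_setOf_eq, and_iff_left hab]
  constructor
  · rintro ⟨h, hω⟩; convert hω using 2
  · intro h; exact ⟨by simp [hab], h⟩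

lemma edgeSet_graphOf (ω : Slot n → Bool) :
    (graphOf ω).edgeSet = Subtype.val '' {e : Slot n | ω e = true} := by
  rw [graphOf, SimpleGraph.edgeSet_fromEdgeSet]
  ext e
  simp only [Set.mem_diff, Set.mem_setOf_eq, Set.mem_image]
  constructor
  · rintro ⟨⟨h, hω⟩, -⟩; exact ⟨⟨e, h⟩, hω, rfl⟩
  · rintro ⟨⟨e', h'⟩, hω, rfl⟩; exact ⟨⟨h', hω⟩, h'⟩

lemma ncard_edgeSet_graphOf (ω : Slot n → Bool) :
    (graphOf ω).edgeSet.ncard = (univ.filter fun e : Slot n => ω e = true).card := by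
  rw [edgeSet_graphOf]
  rw [Set.ncard_image_of_injective _ Subtype.val_injective]
  have : {e : Slot n | ω e = true} = ↑(univ.filter fun e : Slot n => ω e = true) := by
    ext e; simp
  rw [this, Set.ncard_coe_finset]

/-- The probability weight of a configuration. -/
def w (p : ℝ) (ω : Slot n → Bool) : ℝ := ∏ e : Slot n, (if ω e then p else 1 - p)

lemma w_nonneg {p : ℝ} (h0 : 0 ≤ p) (h1 : p ≤ 1) (ω : Slot n → Bool) : 0 ≤ w p ω :=
  Finset.prod_nonneg fun e _ => by split <;> linarith

lemma sum_prod_bool (g : Slot n → Bool → ℝ) :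
    ∑ ω : Slot n → Bool, ∏ e, g e (ω e) = ∏ e, (g e true + g e false) := by
  have := Finset.prod_univ_sum (fun _ : Slot n => (univ : Finset Bool)) g
  rw [Fintype.piFinset_univ] at this
  rw [← this]
  congr 1; ext e
  simp [Fintype.sum_bool]

lemma sum_w (p : ℝ) : ∑ ω : Slot n → Bool, w p ω = 1 := by
  refine (sum_prod_bool (fun (_ : Slot n) (b : Bool) => if b then p else 1 - p)).trans ?_
  simp

/-- Key product-measure computation. -/
lemma sum_w_indicator (p : ℝ) (F : Finset (Slot n)) :
    ∑ ω : Slot n → Bool, w p ω * (if ∀ e ∈ F, ω e = true then (1:ℝ) else 0)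
      = p ^ F.card := by
  have hpt : ∀ ω : Slot n → Bool,
      w p ω * (if ∀ e ∈ F, ω e = true then (1:ℝ) else 0)
        = ∏ e, (fun e b => (if b then p else 1 - p) * (if e ∈ F then (if b then (1:ℝ) else 0) else 1)) e (ω e) := by
    intro ω
    rw [Finset.prod_mul_distrib]
    congr 1
    by_cases h : ∀ e ∈ F, ω e = true
    · rw [if_pos h]
      rw [Finset.prod_eq_one]
      intro e _
      by_cases he : e ∈ F
      · simp [he, h e he]
      · simp [he]
    · rw [if_neg h]
      push_neg at h
      obtain ⟨e, heF, he⟩ := h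
      refine (Finset.prod_eq_zero (mem_univ e) ?_).symm
      simp [heF, he]
  rw [Finset.sum_congr rfl fun ω _ => hpt ω]
  refine (sum_prod_bool (fun (e : Slot n) (b : Bool) => (if b then p else 1 - p) * (if e ∈ F then (if b then (1:ℝ) else 0) else 1))).trans ?_
  have : ∀ e : Slot n,
      ((if (true:Bool) then p else 1 - p) * (if e ∈ F then (if (true:Bool) then (1:ℝ) else 0) else 1)
        + (if (false:Bool) then p else 1 - p) * (if e ∈ F then (if (false:Bool) then (1:ℝ) else 0) else 1))
      = if e ∈ F then p else 1 := by
    intro e; by_cases he : e ∈ F <;> simp [he]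
  rw [Finset.prod_congr rfl fun e _ => this e]
  rw [Finset.prod_ite_mem, Finset.univ_inter, Finset.prod_const]

lemma sum_w_card (p : ℝ) :
    ∑ ω : Slot n → Bool, w p ω * ((univ.filter fun e : Slot n => ω e = true).card : ℝ)
      = p * (Fintype.card (Slot n)) := by
  have : ∀ ω : Slot n → Bool,
      ((univ.filter fun e : Slot n => ω e = true).card : ℝ)
        = ∑ e : Slot n, (if ∀ x ∈ ({e} : Finset (Slot n)), ω x = true then (1:ℝ) else 0) := by
    intro ω
    rw [Finset.card_filter]
    push_cast
    congr 1; ext e; simp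
  simp_rw [this, Finset.mul_sum]
  rw [Finset.sum_comm]
  have := fun e : Slot n => sum_w_indicator p ({e} : Finset (Slot n))
  simp only [Finset.card_singleton, pow_one] at this
  simp_rw [this]
  simp [Finset.card_univ, mul_comm]

open scoped Classical in
/-- Bad pairs: pairs of disjoint vertex sets of sizes `s`, `t` with all cross
edges present. -/
def badPairs (s t : ℕ) (G : SimpleGraph (Fin n)) :
    Finset (Finset (Fin n) × Finset (Fin n)) :=
  ((univ.powersetCard s) ×ˢ (univ.powersetCard t)).filter
    (fun P => Disjoint P.1 P.2 ∧ ∀ a ∈ P.1, ∀ b ∈ P.2, G.Adj a b)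

lemma mem_badPairs {s t : ℕ} {G : SimpleGraph (Fin n)}
    {P : Finset (Fin n) × Finset (Fin n)} :
    P ∈ badPairs s t G ↔ P.1.card = s ∧ P.2.card = t ∧ Disjoint P.1 P.2 ∧
      ∀ a ∈ P.1, ∀ b ∈ P.2, G.Adj a b := by
  simp [badPairs, Finset.mem_filter, Finset.mem_product, Finset.mem_powersetCard_univ,
    and_assoc]

lemma badPairs_mono {s t : ℕ} {G₁ G₂ : SimpleGraph (Fin n)} (h : G₁ ≤ G₂) :
    badPairs s t G₁ ⊆ badPairs s t G₂ := by
  intro P hP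
  rw [mem_badPairs] at hP ⊢
  exact ⟨hP.1, hP.2.1, hP.2.2.1, fun a ha b hb => h (hP.2.2.2 a ha b hb)⟩

/-- The deletion step: from any graph one can delete at most `(badPairs G).card`
edges to obtain a graph with no bad pairs. -/
lemma deletion (s t : ℕ) (hs : 1 ≤ s) (ht : 1 ≤ t) :
    ∀ (k : ℕ) (G : SimpleGraph (Fin n)), (badPairs s t G).card ≤ k →
      ∃ G' : SimpleGraph (Fin n), G' ≤ G ∧ badPairs s t G' = ∅ ∧
        G.edgeSet.ncard ≤ G'.edgeSet.ncard + k := by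
  intro k
  induction k with
  | zero =>
    intro G hG
    refine ⟨G, le_refl _, ?_, by omega⟩
    exact Finset.card_eq_zero.1 (Nat.le_zero.1 hG)
  | succ k ih =>
    intro G hG
    by_cases hE : badPairs s t G = ∅
    · exact ⟨G, le_refl _, hE, by omega⟩
    · obtain ⟨P, hP⟩ := Finset.nonempty_iff_ne_empty.2 hE
      have hPmem := hP
      rw [mem_badPairs] at hP
      obtain ⟨hA, hB, hd, hadj⟩ := hP
      obtain ⟨a, ha⟩ : P.1.Nonempty := Finset.card_pos.1 (by omega)
      obtain ⟨b, hb⟩ : P.2.Nonempty := Finset.card_pos.1 (by omega)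
      have hab : a ≠ b := fun h => (Finset.disjoint_left.1 hd ha) (h ▸ hb)
      have hadj' : G.Adj a b := hadj a ha b hb
      set G₁ := G.deleteEdges {s(a, b)} with hG₁
      have hle : G₁ ≤ G := SimpleGraph.deleteEdges_le _
      have hnadj : ¬ G₁.Adj a b := by
        simp [hG₁, SimpleGraph.deleteEdges_adj]
      have hsub : badPairs s t G₁ ⊆ (badPairs s t G).erase P := by
        intro Q hQ
        refine Finset.mem_erase.2 ⟨?_, badPairs_mono hle hQ⟩
        rintro rfl
        rw [mem_badPairs] at hQ
        exact hnadj (hQ.2.2.2 a ha b hb)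
      have hcard : (badPairs s t G₁).card ≤ k := by
        have h1 := Finset.card_le_card hsub
        have h2 := Finset.card_erase_of_mem hPmem
        have h3 : 1 ≤ (badPairs s t G).card := Finset.card_pos.2 ⟨P, hPmem⟩
        omega
      obtain ⟨G', hG'le, hG'bad, hG'card⟩ := ih G₁ hcard
      refine ⟨G', hG'le.trans hle, hG'bad, ?_⟩
      have hmem : s(a, b) ∈ G.edgeSet := hadj'
      have hE1 : G₁.edgeSet = G.edgeSet \ {s(a, b)} :=
        SimpleGraph.edgeSet_deleteEdges _
      have : G₁.edgeSet.ncard + 1 = G.edgeSet.ncard := by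
        rw [hE1]
        exact Set.ncard_diff_singleton_add_one hmem (Set.toFinite _)
      omega

/-- A graph with no bad pairs contains no copy of `K_{s,t}`. -/
lemma not_copy {s t : ℕ} {G : SimpleGraph (Fin n)} (h : badPairs s t G = ∅) :
    ¬ HasSubgraphCopy (completeBipartiteGraph (Fin s) (Fin t)) G := by
  rintro ⟨f, hf⟩
  set A : Finset (Fin n) := univ.image (fun i : Fin s => f (Sum.inl i)) with hA
  set B : Finset (Fin n) := univ.image (fun j : Fin t => f (Sum.inr j)) with hB
  have hinj1 : Function.Injective (fun i : Fin s => f (Sum.inl i)) :=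
    fun i j hij => Sum.inl_injective (hf hij)
  have hinj2 : Function.Injective (fun j : Fin t => f (Sum.inr j)) :=
    fun i j hij => Sum.inr_injective (hf hij)
  have hP : (A, B) ∈ badPairs s t G := by
    rw [mem_badPairs]
    refine ⟨?_, ?_, ?_, ?_⟩
    · rw [hA, Finset.card_image_of_injective _ hinj1]; simp
    · rw [hB, Finset.card_image_of_injective _ hinj2]; simp
    · rw [Finset.disjoint_left]
      rintro x hx hx'
      simp only [hA, hB, Finset.mem_image, Finset.mem_univ, true_and] at hx hx'
      obtain ⟨i, rfl⟩ := hx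
      obtain ⟨j, hj⟩ := hx'
      exact (Sum.inr_ne_inl (hf hj))
    · rintro x hx y hy
      simp only [hA, hB, Finset.mem_image, Finset.mem_univ, true_and] at hx hy
      obtain ⟨i, rfl⟩ := hx
      obtain ⟨j, rfl⟩ := hy
      exact f.map_adj (by simp)
  rw [h] at hP
  exact absurd hP (Finset.notMem_empty _)

/-- The slots corresponding to cross edges between `A` and `B`. -/
def crossSlots (A B : Finset (Fin n)) : Finset (Slot n) :=
  ((A ×ˢ B).filter (fun q => q.1 ≠ q.2)).attach.image
    (fun q => ⟨s(q.1.1, q.1.2), by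
      have := (Finset.mem_filter.1 q.2).2
      simpa [Sym2.mk_isDiag_iff] using this⟩)

lemma mem_crossSlots {A B : Finset (Fin n)} {e : Slot n} :
    e ∈ crossSlots A B ↔ ∃ a ∈ A, ∃ b ∈ B, a ≠ b ∧ (e : Sym2 (Fin n)) = s(a, b) := by
  constructor
  · intro he
    obtain ⟨q, hq, rfl⟩ := Finset.mem_image.1 he
    have h1 := Finset.mem_filter.1 q.2
    have h2 := Finset.mem_product.1 h1.1
    exact ⟨q.1.1, h2.1, q.1.2, h2.2, h1.2, rfl⟩
  · rintro ⟨a, ha, b, hb, hab, he⟩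
    refine Finset.mem_image.2 ⟨⟨(a, b),
      Finset.mem_filter.2 ⟨Finset.mem_product.2 ⟨ha, hb⟩, hab⟩⟩, Finset.mem_attach _ _, ?_⟩
    exact Subtype.ext he.symm

lemma card_crossSlots {A B : Finset (Fin n)} (hd : Disjoint A B) :
    (crossSlots A B).card = A.card * B.card := by
  rw [crossSlots]
  rw [Finset.card_image_of_injective _ ?_]
  · rw [Finset.card_attach]
    rw [Finset.filter_true_of_mem ?_, Finset.card_product]
    intro q hq
    have h := Finset.mem_product.1 hq
    exact fun he => (Finset.disjoint_left.1 hd h.1) (he ▸ h.2)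
  · rintro ⟨⟨a, b⟩, hq⟩ ⟨⟨a', b'⟩, hq'⟩ h
    have h1 := Finset.mem_product.1 (Finset.mem_filter.1 hq).1
    have h2 := Finset.mem_product.1 (Finset.mem_filter.1 hq').1
    rw [Subtype.ext_iff] at h
    simp only [Sym2.eq_iff] at h
    rcases h with ⟨rfl, rfl⟩ | ⟨rfl, rfl⟩
    · rfl
    · exact absurd h1.1 (fun hc => (Finset.disjoint_left.1 hd hc) h2.2)

lemma cross_cond (ω : Slot n → Bool) {A B : Finset (Fin n)} (hd : Disjoint A B) :
    (∀ a ∈ A, ∀ b ∈ B, (graphOf ω).Adj a b) ↔ ∀ e ∈ crossSlots A B, ω e = true := by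
  constructor
  · intro h e he
    obtain ⟨a, ha, b, hb, hab, hval⟩ := mem_crossSlots.1 he
    have := (graphOf_adj hab).1 (h a ha b hb)
    convert this using 2
    exact Subtype.ext hval
  · intro h a ha b hb
    have hab : a ≠ b := fun hc => (Finset.disjoint_left.1 hd ha) (hc ▸ hb)
    exact (graphOf_adj hab).2
      (h ⟨s(a, b), by simp [hab]⟩ (mem_crossSlots.2 ⟨a, ha, b, hb, hab, rfl⟩))

lemma sum_w_bad (p : ℝ) (hp : 0 ≤ p) (s t : ℕ) :
    ∑ ω : Slot n → Bool, w p ω * ((badPairs s t (graphOf ω)).card : ℝ)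
      ≤ (n.choose s : ℝ) * (n.choose t : ℝ) * p ^ (s * t) := by
  classical
  have hcard : ∀ ω : Slot n → Bool,
      ((badPairs s t (graphOf ω)).card : ℝ)
        = ∑ P ∈ (univ.powersetCard s) ×ˢ (univ.powersetCard t),
            (if Disjoint P.1 P.2 ∧ ∀ a ∈ P.1, ∀ b ∈ P.2, (graphOf ω).Adj a b
              then (1:ℝ) else 0) := by
    intro ω
    rw [badPairs, Finset.card_filter]
    push_cast
    apply Finset.sum_congr rfl
    intro P _
    congr 1
  calc ∑ ω : Slot n → Bool, w p ω * ((badPairs s t (graphOf ω)).card : ℝ)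
      = ∑ P ∈ (univ.powersetCard s) ×ˢ (univ.powersetCard t),
          ∑ ω : Slot n → Bool, w p ω *
            (if Disjoint P.1 P.2 ∧ ∀ a ∈ P.1, ∀ b ∈ P.2, (graphOf ω).Adj a b
              then (1:ℝ) else 0) := by
        simp_rw [hcard, Finset.mul_sum]
        rw [Finset.sum_comm]
    _ ≤ ∑ P ∈ (univ.powersetCard s) ×ˢ (univ.powersetCard t), p ^ (s * t) := by
        apply Finset.sum_le_sum
        intro P hP
        rw [Finset.mem_product, Finset.mem_powersetCard_univ,
          Finset.mem_powersetCard_univ] at hP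
        by_cases hd : Disjoint P.1 P.2
        · have heq : ∀ ω : Slot n → Bool,
              (if Disjoint P.1 P.2 ∧ ∀ a ∈ P.1, ∀ b ∈ P.2, (graphOf ω).Adj a b
                then (1:ℝ) else 0)
              = (if ∀ e ∈ crossSlots P.1 P.2, ω e = true then (1:ℝ) else 0) := by
            intro ω
            refine if_congr ?_ rfl rfl
            exact ⟨fun h => (cross_cond ω hd).1 h.2, fun h => ⟨hd, (cross_cond ω hd).2 h⟩⟩
          simp_rw [heq]
          rw [sum_w_indicator, card_crossSlots hd, hP.1, hP.2]
        · have heq : ∀ ω : Slot n → Bool,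
              (if Disjoint P.1 P.2 ∧ ∀ a ∈ P.1, ∀ b ∈ P.2, (graphOf ω).Adj a b
                then (1:ℝ) else 0) = 0 := by
            intro ω; rw [if_neg]; exact fun h => hd h.1
          simp_rw [heq, mul_zero, Finset.sum_const_zero]
          exact pow_nonneg hp _
    _ = (n.choose s : ℝ) * (n.choose t : ℝ) * p ^ (s * t) := by
        rw [Finset.sum_const, Finset.card_product, Finset.card_powersetCard,
          Finset.card_powersetCard, Finset.card_univ, Fintype.card_fin, nsmul_eq_mul]
        push_cast
        ring

lemma exists_ge_expectation {ι : Type*} [Fintype ι] [Nonempty ι] (w f : ι → ℝ)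
    (hw : ∀ i, 0 ≤ w i) (hw1 : ∑ i, w i = 1) (B : ℝ) (hB : B ≤ ∑ i, w i * f i) :
    ∃ i, B ≤ f i := by
  obtain ⟨i₀, -, hi₀⟩ := Finset.exists_max_image univ f univ_nonempty
  refine ⟨i₀, hB.trans ?_⟩
  calc ∑ i, w i * f i
      ≤ ∑ i, w i * f i₀ :=
        Finset.sum_le_sum fun i _ => mul_le_mul_of_nonneg_left (hi₀ i (mem_univ i)) (hw i)
    _ = f i₀ := by rw [← Finset.sum_mul, hw1, one_mul]

lemma numeric (s t n : ℕ) (hs : 2 ≤ s) (hst : s ≤ t) (hn : 2 ≤ n) :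
    (1/16 : ℝ) * (n:ℝ) ^ ((2:ℝ) - ((s:ℝ)+(t:ℝ)-2)/((s:ℝ)*(t:ℝ)-1))
      ≤ ((1/2) * (n:ℝ) ^ (-(((s:ℝ)+(t:ℝ)-2)/((s:ℝ)*(t:ℝ)-1)))) * (n.choose 2 : ℝ)
        - (n:ℝ)^s * (n:ℝ)^t *
          ((1/2) * (n:ℝ) ^ (-(((s:ℝ)+(t:ℝ)-2)/((s:ℝ)*(t:ℝ)-1)))) ^ (s*t) := by
  have hs2 : (2:ℝ) ≤ (s:ℝ) := by exact_mod_cast hs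
  have ht2 : (2:ℝ) ≤ (t:ℝ) := le_trans hs2 (by exact_mod_cast hst)
  have hn2 : (2:ℝ) ≤ (n:ℝ) := by exact_mod_cast hn
  have hn0 : (0:ℝ) < (n:ℝ) := by linarith
  have hc4 : (4:ℝ) ≤ (s:ℝ)*(t:ℝ) := by nlinarith
  have hden : (0:ℝ) < (s:ℝ)*(t:ℝ) - 1 := by linarith
  set β : ℝ := ((s:ℝ)+(t:ℝ)-2)/((s:ℝ)*(t:ℝ)-1) with hβ
  set q : ℝ := (n:ℝ)^(-β) with hqdef
  have hq0 : 0 < q := Real.rpow_pos_of_pos hn0 _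
  set p : ℝ := (1/2) * q with hpdef
  have hp0 : 0 < p := by positivity
  have hstn : 4 ≤ s*t := by
    calc 4 = 2*2 := rfl
    _ ≤ s*t := Nat.mul_le_mul hs (le_trans hs hst)
  set c : ℕ := s*t - 1 with hcdef
  have hc3 : 3 ≤ c := by omega
  -- q^c = n^(-(s+t-2))
  have hqpow : q^c = (n:ℝ)^(-((s:ℝ)+(t:ℝ)-2)) := by
    rw [hqdef, ← Real.rpow_natCast ((n:ℝ)^(-β)) c, ← Real.rpow_mul hn0.le]
    congr 1
    have hcast : ((c:ℕ):ℝ) = (s:ℝ)*(t:ℝ) - 1 := by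
      rw [hcdef]
      push_cast [Nat.cast_sub (by omega : 1 ≤ s*t)]
      ring
    rw [hcast, hβ]
    field_simp
  -- n^s * n^t = n^(s+t) as rpow
  have hnst : (n:ℝ)^s * (n:ℝ)^t = (n:ℝ)^((s:ℝ)+(t:ℝ)) := by
    rw [← Real.rpow_natCast (n:ℝ) s, ← Real.rpow_natCast (n:ℝ) t, ← Real.rpow_add hn0]
  have hX : (n:ℝ)^((s:ℝ)+(t:ℝ)) * (n:ℝ)^(-((s:ℝ)+(t:ℝ)-2)) = (n:ℝ)^2 := by
    rw [← Real.rpow_add hn0]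
    rw [show (s:ℝ)+(t:ℝ) + -((s:ℝ)+(t:ℝ)-2) = ((2:ℕ):ℝ) by push_cast; ring]
    exact Real.rpow_natCast _ 2
  have hpsplit : p^(s*t) = p * ((1/2)^c * q^c) := by
    rw [← mul_pow, ← hpdef, ← pow_succ']
    congr 1
    omega
  have hd8 : ((1:ℝ)/2)^c ≤ 1/8 := by
    calc ((1:ℝ)/2)^c ≤ (1/2)^3 := pow_le_pow_of_le_one (by norm_num) (by norm_num) hc3
    _ = 1/8 := by norm_num
  -- Key 1
  have key1 : (n:ℝ)^s * (n:ℝ)^t * p^(s*t) ≤ (1/8) * p * (n:ℝ)^2 := by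
    rw [hpsplit, hnst, hqpow]
    have e1 : (n:ℝ)^((s:ℝ)+(t:ℝ)) * (p * ((1/2)^c * (n:ℝ)^(-((s:ℝ)+(t:ℝ)-2))))
        = (1/2)^c * (p * ((n:ℝ)^((s:ℝ)+(t:ℝ)) * (n:ℝ)^(-((s:ℝ)+(t:ℝ)-2)))) := by ring
    rw [e1, hX]
    calc ((1:ℝ)/2)^c * (p * (n:ℝ)^2) ≤ (1/8) * (p * (n:ℝ)^2) :=
          mul_le_mul_of_nonneg_right hd8 (by positivity)
      _ = (1/8) * p * (n:ℝ)^2 := by ring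
  -- Key 2
  have key2 : (1/4) * p * (n:ℝ)^2 ≤ p * (n.choose 2 : ℝ) := by
    rw [Nat.cast_choose_two]
    have h2 : (1/4) * (n:ℝ)^2 ≤ (n:ℝ) * ((n:ℝ) - 1) / 2 := by nlinarith
    nlinarith [hp0.le, mul_le_mul_of_nonneg_left h2 hp0.le]
  -- Key 3
  have key3 : (1/16 : ℝ) * (n:ℝ) ^ ((2:ℝ) - β) = (1/8) * p * (n:ℝ)^2 := by
    rw [show (2:ℝ) - β = ((2:ℕ):ℝ) + (-β) by push_cast; ring, Real.rpow_add hn0,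
      Real.rpow_natCast]
    rw [hpdef, ← hqdef]
    ring
  rw [key3]
  linarith [key1, key2]


end KstAux

open KstAux in
/-- **Probabilistic lower bound for `ex(n, K_{s,t})`.** For `t ≥ s ≥ 2` and every
`n ≥ 2` there is a `K_{s,t}`-free graph on `n` vertices with at least
`(1/16)·n^{2−(s+t−2)/(st−1)}` edges. -/
theorem kst_lower_bound (s t : ℕ) (hs : 2 ≤ s) (hst : s ≤ t) (n : ℕ) (hn : 2 ≤ n) :
    ∃ G : SimpleGraph (Fin n),
      ¬ HasSubgraphCopy (completeBipartiteGraph (Fin s) (Fin t)) G ∧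
      (1 / 16 : ℝ) * (n : ℝ) ^
          ((2 : ℝ) - ((s : ℝ) + (t : ℝ) - 2) / ((s : ℝ) * (t : ℝ) - 1))
        ≤ (G.edgeSet.ncard : ℝ) := by
  classical
  have hs2 : (2:ℝ) ≤ (s:ℝ) := by exact_mod_cast hs
  have ht2 : (2:ℝ) ≤ (t:ℝ) := le_trans hs2 (by exact_mod_cast hst)
  have hn2 : (2:ℝ) ≤ (n:ℝ) := by exact_mod_cast hn
  have hn0 : (0:ℝ) < (n:ℝ) := by linarith
  have hc4 : (4:ℝ) ≤ (s:ℝ)*(t:ℝ) := by nlinarith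
  set β : ℝ := ((s:ℝ)+(t:ℝ)-2)/((s:ℝ)*(t:ℝ)-1) with hβ
  set p : ℝ := (1/2) * (n:ℝ)^(-β) with hpdef
  have hβ0 : 0 ≤ β := div_nonneg (by linarith) (by linarith)
  have hq1 : (n:ℝ)^(-β) ≤ 1 :=
    Real.rpow_le_one_of_one_le_of_nonpos (by linarith) (by linarith)
  have hp0 : 0 < p := by
    have := Real.rpow_pos_of_pos hn0 (-β)
    rw [hpdef]; positivity
  have hp1 : p ≤ 1 := by rw [hpdef]; linarith
  -- expected number of edges
  have hE1 : ∑ ω : Slot n → Bool, w p ω * ((graphOf ω).edgeSet.ncard : ℝ)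
      = p * (n.choose 2 : ℝ) := by
    simp_rw [ncard_edgeSet_graphOf]
    rw [sum_w_card]
    congr 2
    rw [Sym2.card_subtype_not_diag, Fintype.card_fin]
  -- expected number of bad pairs
  have hE2 := sum_w_bad (n := n) p hp0.le s t
  have hch : (n.choose s : ℝ) * (n.choose t : ℝ) * p^(s*t)
      ≤ (n:ℝ)^s * (n:ℝ)^t * p^(s*t) := by
    have h1 : (n.choose s : ℝ) ≤ (n:ℝ)^s := by exact_mod_cast Nat.choose_le_pow _ _
    have h2 : (n.choose t : ℝ) ≤ (n:ℝ)^t := by exact_mod_cast Nat.choose_le_pow _ _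
    have h3 : (0:ℝ) ≤ (n.choose s : ℝ) := Nat.cast_nonneg _
    have h4 : (0:ℝ) ≤ (n:ℝ)^s := by positivity
    exact mul_le_mul_of_nonneg_right
      (mul_le_mul h1 h2 (Nat.cast_nonneg _) h4) (pow_nonneg hp0.le _)
  have hnum := numeric s t n hs hst hn
  rw [← hβ, ← hpdef] at hnum
  -- the expectation of edges minus bad pairs
  have hEX : (1/16 : ℝ) * (n:ℝ) ^ ((2:ℝ) - β)
      ≤ ∑ ω : Slot n → Bool, w p ω *
          (((graphOf ω).edgeSet.ncard : ℝ) - ((badPairs s t (graphOf ω)).card : ℝ)) := by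
    have hsplit : ∑ ω : Slot n → Bool, w p ω *
          (((graphOf ω).edgeSet.ncard : ℝ) - ((badPairs s t (graphOf ω)).card : ℝ))
        = (∑ ω : Slot n → Bool, w p ω * ((graphOf ω).edgeSet.ncard : ℝ))
          - ∑ ω : Slot n → Bool, w p ω * ((badPairs s t (graphOf ω)).card : ℝ) := by
      simp_rw [mul_sub]
      rw [Finset.sum_sub_distrib]
    rw [hsplit, hE1]
    linarith [hE2, hch, hnum]
  obtain ⟨ω, hω⟩ := exists_ge_expectation (w p)
    (fun ω => ((graphOf ω).edgeSet.ncard : ℝ) - ((badPairs s t (graphOf ω)).card : ℝ))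
    (w_nonneg hp0.le hp1) (sum_w p) _ hEX
  obtain ⟨G', hle, hbad, hcard⟩ := deletion s t (by omega) (by omega)
    ((badPairs s t (graphOf ω)).card) (graphOf ω) le_rfl
  refine ⟨G', not_copy hbad, ?_⟩
  have hc : ((graphOf ω).edgeSet.ncard : ℝ)
      ≤ (G'.edgeSet.ncard : ℝ) + ((badPairs s t (graphOf ω)).card : ℝ) := by
    exact_mod_cast hcard
  linarith [hω, hc]
end
end

section
/- Let k ≥ 1 and n ≥ 2k+1. If G is a finite simple graph on n vertices containing no matching of k+1 edges (every set of pairwise disjoint edges of G has at most k edges), then e(G) ≤ max{ C(2k+1,2), C(k,2) + (n−k)·k }, where C(a,2)=a(a−1)/2. -/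
/-!
View the edges as 2-subsets of `ℕ`. For `i < j`, the UV-compression that trades `j` for `i`
keeps the number of edges, cannot create `k + 1` disjoint edges, and lowers the total vertex sum,
so we may assume the family is shifted. A shifted family without `k + 1` disjoint edges misses
one of the `k + 1` disjoint pairs `{t, 2k + 1 - t}`, `t ≤ k`; then every edge meets `[0, t)` or
lies in `[t, 2k + 1 - t)`, leaving at most `C(n, 2) - C(n - t, 2) + C(2k + 1 - 2t, 2)` edges, a
convex function of `t` that is largest at `t = 0` or `t = k`.
-/

open Finset UV
open scoped FinsetFamily

namespace Finset

variable {α : Type*} [DecidableEq α]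

def MatchingNumberLE (𝒜 : Finset (Finset α)) (k : ℕ) : Prop :=
  ∀ M ⊆ 𝒜, (M : Set (Finset α)).PairwiseDisjoint id → #M ≤ k

lemma map_swap_of_mem_of_notMem {i j : α} {A : Finset α} (hi : i ∈ A) (hj : j ∉ A) :
    A.map (Equiv.swap i j).toEmbedding = (A ⊔ {j}) \ {i} := by
  ext x
  simp only [mem_map_equiv, Equiv.symm_swap, sup_eq_union, mem_sdiff, mem_union, mem_singleton]
  rcases eq_or_ne x i with rfl | hxi
  · simp [Equiv.swap_apply_left, hj]
  rcases eq_or_ne x j with rfl | hxj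
  · simp [Equiv.swap_apply_right, hi, hxi]
  simp [Equiv.swap_apply_of_ne_of_ne hxi hxj, hxi, hxj]

lemma map_swap_of_notMem_of_notMem {i j : α} {A : Finset α} (hi : i ∉ A) (hj : j ∉ A) :
    A.map (Equiv.swap i j).toEmbedding = A := by
  ext x
  simp only [mem_map_equiv, Equiv.symm_swap]
  rcases eq_or_ne x i with rfl | hxi
  · simp [hi, hj]
  rcases eq_or_ne x j with rfl | hxj
  · simp [hi, hj]
  rw [Equiv.swap_apply_of_ne_of_ne hxi hxj]

/-- If some member of a disjoint subfamily of the compression was moved, it was moved away from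
`j`; swapping `i` and `j` then carries the whole subfamily back into `𝒜`. -/
lemma MatchingNumberLE.uvCompression {𝒜 : Finset (Finset α)} {k : ℕ}
    (h : MatchingNumberLE 𝒜 k) (i j : α) : MatchingNumberLE (𝓒 {i} {j} 𝒜) k := by
  intro M hM hdisj
  by_cases hM𝒜 : M ⊆ 𝒜
  · exact h M hM𝒜 hdisj
  obtain ⟨A₀, hA₀M, hA₀𝒜⟩ := not_subset.1 hM𝒜
  have hi₀ : i ∈ A₀ := singleton_subset_iff.1 (le_of_mem_compression_of_notMem (hM hA₀M) hA₀𝒜)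
  have hj₀ : j ∉ A₀ :=
    disjoint_singleton_left.1 (disjoint_of_mem_compression_of_notMem (hM hA₀M) hA₀𝒜)
  have hσ : ∀ A ∈ M, A.map (Equiv.swap i j).toEmbedding ∈ 𝒜 := by
    intro A hAM
    by_cases hA𝒜 : A ∈ 𝒜
    · have hiA : i ∉ A := fun hiA ↦
        hA₀𝒜 (by rwa [hdisj.elim hA₀M hAM (not_disjoint_iff.2 ⟨i, hi₀, hiA⟩)])
      by_cases hjA : j ∈ A
      · rw [Equiv.swap_comm, map_swap_of_mem_of_notMem hjA hiA]
        exact sup_sdiff_mem_of_mem_compression (hM hAM) (singleton_subset_iff.2 hjA)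
          (disjoint_singleton_left.2 hiA)
      · rwa [map_swap_of_notMem_of_notMem hiA hjA]
    · rw [map_swap_of_mem_of_notMem
        (singleton_subset_iff.1 (le_of_mem_compression_of_notMem (hM hAM) hA𝒜))
        (disjoint_singleton_left.1 (disjoint_of_mem_compression_of_notMem (hM hAM) hA𝒜))]
      exact sup_sdiff_mem_of_mem_compression_of_notMem (hM hAM) hA𝒜
  calc #M = #(M.map (mapEmbedding (Equiv.swap i j).toEmbedding).toEmbedding) := (card_map _).symm
    _ ≤ k := by
      refine h _ (fun B hB ↦ ?_) ?_
      · obtain ⟨A, hA, rfl⟩ := mem_map.1 hB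
        exact hσ A hA
      · rw [coe_map]
        refine (Function.Embedding.injective _).injOn.pairwiseDisjoint_image.2
          fun A hA B hB hAB ↦ ?_
        simpa [Function.onFun] using hdisj hA hB hAB

lemma sum_compress_lt {i j : ℕ} (hij : i < j) {A : Finset ℕ} (h : compress {i} {j} A ≠ A) :
    ∑ a ∈ compress {i} {j} A, a < ∑ a ∈ A, a := by
  unfold compress at h ⊢
  split_ifs at h ⊢ with hA
  · obtain ⟨hiA, hjA⟩ := hA
    have hsplit := sum_sdiff (f := fun a ↦ a) (hjA.trans (subset_union_left (s₂ := {i})))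
    rw [sum_singleton, union_singleton, sum_insert (disjoint_singleton_left.1 hiA)] at hsplit
    rw [sup_eq_union, union_singleton]
    omega
  · exact absurd rfl h

lemma sum_sum_compression_lt {i j : ℕ} (hij : i < j) {𝒜 : Finset (Finset ℕ)}
    (h : 𝓒 {i} {j} 𝒜 ≠ 𝒜) :
    ∑ A ∈ 𝓒 {i} {j} 𝒜, ∑ a ∈ A, a < ∑ A ∈ 𝒜, ∑ a ∈ A, a := by
  rw [compression] at h ⊢
  have hmoved : {A ∈ 𝒜 | compress {i} {j} A ∉ 𝒜}.Nonempty := by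
    contrapose! h
    rw [filter_image, h, image_empty, union_empty]
    exact filter_true_of_mem fun A hA ↦ not_not.1 (filter_eq_empty_iff.1 h hA)
  rw [sum_union compress_disjoint, filter_image, sum_image compress_injOn,
    ← sum_filter_add_sum_filter_not 𝒜 (fun A ↦ compress {i} {j} A ∈ 𝒜), add_lt_add_iff_left]
  refine sum_lt_sum_of_nonempty hmoved fun A hA ↦ sum_compress_lt hij ?_
  rw [mem_filter] at hA
  exact fun h ↦ hA.2 (by rw [h]; exact hA.1)

theorem exists_isCompressed (p : Finset (Finset ℕ) → Prop)
    (hp : ∀ ⦃𝒜 : Finset (Finset ℕ)⦄ ⦃i j : ℕ⦄, i < j → p 𝒜 → p (𝓒 {i} {j} 𝒜))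
    {𝒜 : Finset (Finset ℕ)} (h𝒜 : p 𝒜) :
    ∃ ℬ, p ℬ ∧ #ℬ = #𝒜 ∧ ∀ ⦃i j : ℕ⦄, i < j → IsCompressed {i} {j} ℬ := by
  by_cases hc : ∀ ⦃i j : ℕ⦄, i < j → IsCompressed {i} {j} 𝒜
  · exact ⟨𝒜, h𝒜, rfl, hc⟩
  push Not at hc
  obtain ⟨i, j, hij, hne⟩ := hc
  obtain ⟨ℬ, hℬ, hcard, hcomp⟩ := exists_isCompressed p hp (hp hij h𝒜)
  exact ⟨ℬ, hℬ, hcard.trans (card_compression _ _ _), hcomp⟩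
termination_by ∑ A ∈ 𝒜, ∑ a ∈ A, a
decreasing_by exact sum_sum_compression_lt hij hne

variable {ℬ : Finset (Finset ℕ)}

lemma pair_mem_of_le_left (hℬ : ∀ ⦃i j : ℕ⦄, i < j → IsCompressed {i} {j} ℬ) {x y z : ℕ}
    (h : {x, y} ∈ ℬ) (hxy : x ≠ y) (hzx : z ≤ x) (hzy : z ≠ y) : {z, y} ∈ ℬ := by
  obtain rfl | hzx := hzx.eq_or_lt
  · exact h
  have hcomp := (hℬ hzx).eq
  have := sup_sdiff_mem_of_mem_compression (by rwa [hcomp]) (by simp) (by simp [hzx.ne, hzy])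
  convert this using 1
  ext a
  simp only [mem_insert, mem_singleton, sup_eq_union, mem_sdiff, mem_union]
  omega

lemma pair_mem_of_le (hℬ : ∀ ⦃i j : ℕ⦄, i < j → IsCompressed {i} {j} ℬ) {a b a' b' : ℕ}
    (h : {a, b} ∈ ℬ) (hab : a ≠ b) (ha : a' ≤ a) (hb : b' ≤ b) (hab' : a' < b') :
    {a', b'} ∈ ℬ := by
  have h' : {a', b} ∈ ℬ := pair_mem_of_le_left hℬ h hab ha (by omega)
  rw [pair_comm] at h' ⊢
  exact pair_mem_of_le_left hℬ h' (by omega) hb (by omega)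

lemma exists_pair_notMem {k : ℕ} (hm : MatchingNumberLE ℬ k) :
    ∃ t ≤ k, {t, 2 * k + 1 - t} ∉ ℬ := by
  by_contra! h
  have hinj : Set.InjOn (fun s ↦ ({s, 2 * k + 1 - s} : Finset ℕ)) (range (k + 1)) := by
    intro a ha b hb hab
    have : a ∈ ({b, 2 * k + 1 - b} : Finset ℕ) := by
      rw [← show ({a, 2 * k + 1 - a} : Finset ℕ) = {b, 2 * k + 1 - b} from hab]
      exact mem_insert_self _ _
    simp only [coe_range, Set.mem_Iio, mem_insert, mem_singleton] at ha hb this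
    omega
  have := hm _ (image_subset_iff.2 fun s hs ↦ h s (Nat.lt_succ_iff.1 (mem_range.1 hs))) ?_
  · rw [card_image_of_injOn hinj, card_range] at this
    omega
  rw [coe_image, hinj.pairwiseDisjoint_image]
  intro a ha b hb hab
  simp only [Function.onFun, Function.comp_apply, id, disjoint_left, mem_insert, mem_singleton]
  simp only [coe_range, Set.mem_Iio] at ha hb
  omega

lemma subset_sdiff_union_of_pair_notMem {n t s : ℕ} (hℬ₂ : ℬ ⊆ powersetCard 2 (range n))
    (hℬ : ∀ ⦃i j : ℕ⦄, i < j → IsCompressed {i} {j} ℬ) (hts : t < s) (ht : {t, s} ∉ ℬ) :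
    ℬ ⊆ (powersetCard 2 (range n) \ powersetCard 2 (Ico t n)) ∪ powersetCard 2 (Ico t s) := by
  intro A hA
  have hA₂ := hℬ₂ hA
  obtain ⟨x, y, hxy, rfl⟩ := card_eq_two.1 (mem_powersetCard.1 hA₂).2
  wlog hlt : x < y generalizing x y
  · rw [pair_comm] at hA hA₂ ⊢
    exact this y x hxy.symm hA hA₂ (by omega)
  by_cases hxt : x < t
  · refine mem_union_left _ (mem_sdiff.2 ⟨hA₂, fun h ↦ ?_⟩)
    have := (mem_powersetCard.1 h).1 (mem_insert_self x {y})
    rw [mem_Ico] at this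
    omega
  have hys : y < s := by
    by_contra! hys
    exact ht (pair_mem_of_le hℬ hA hxy (by omega) hys hts)
  refine mem_union_right _ (mem_powersetCard.2 ⟨?_, card_pair hxy⟩)
  intro a ha
  simp only [mem_insert, mem_singleton] at ha
  rw [mem_Ico]
  omega

lemma choose_two_sub_add_choose_two_le {n k t : ℕ} (htk : t ≤ k) (hkn : k ≤ n) :
    n.choose 2 - (n - t).choose 2 + (2 * (k - t) + 1).choose 2 ≤
      max ((2 * k + 1).choose 2) (k.choose 2 + (n - k) * k) := by
  rcases Nat.eq_zero_or_pos k with rfl | hk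
  · simp [Nat.le_zero.1 htk]
  set F := n.choose 2 - (n - t).choose 2 + (2 * (k - t) + 1).choose 2
  set A := (2 * k + 1).choose 2
  set B := k.choose 2 + (n - k) * k
  have hle : (n - t).choose 2 ≤ n.choose 2 := Nat.choose_le_choose 2 (Nat.sub_le n t)
  -- `F` is a convex quadratic in `t`, equal to `A` at `t = 0` and to `B` at `t = k`
  have convex : (k : ℚ) * F + 3 / 2 * k * t * (k - t) = (k - t) * A + t * B := by
    simp only [F, A, B]
    push_cast [Nat.cast_sub hle, Nat.cast_sub htk, Nat.cast_sub hkn, Nat.cast_sub (htk.trans hkn),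
      Nat.cast_choose_two]
    ring
  have hkt : (0 : ℚ) ≤ k - t := by rw [sub_nonneg]; exact_mod_cast htk
  have hA : (k - t) * (A : ℚ) ≤ (k - t) * (max A B : ℕ) :=
    mul_le_mul_of_nonneg_left (by exact_mod_cast le_max_left A B) hkt
  have hB : (t : ℚ) * B ≤ t * (max A B : ℕ) :=
    mul_le_mul_of_nonneg_left (by exact_mod_cast le_max_right A B) (Nat.cast_nonneg t)
  have hgap : (0 : ℚ) ≤ 3 / 2 * k * t * (k - t) := by positivity
  have : (k : ℚ) * F ≤ k * (max A B : ℕ) := by linarith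
  exact_mod_cast le_of_mul_le_mul_left this (by exact_mod_cast hk)

theorem card_le_of_isCompressed {n k : ℕ} (hℬ₂ : ℬ ⊆ powersetCard 2 (range n))
    (hm : MatchingNumberLE ℬ k) (hℬ : ∀ ⦃i j : ℕ⦄, i < j → IsCompressed {i} {j} ℬ)
    (hkn : k ≤ n) : #ℬ ≤ max ((2 * k + 1).choose 2) (k.choose 2 + (n - k) * k) := by
  obtain ⟨t, htk, ht⟩ := exists_pair_notMem hm
  have hsub : powersetCard 2 (Ico t n) ⊆ powersetCard 2 (range n) :=
    powersetCard_mono fun a ha ↦ mem_range.2 (mem_Ico.1 ha).2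
  calc #ℬ ≤ #((powersetCard 2 (range n) \ powersetCard 2 (Ico t n)) ∪
        powersetCard 2 (Ico t (2 * k + 1 - t))) :=
        card_le_card (subset_sdiff_union_of_pair_notMem hℬ₂ hℬ (by omega) ht)
    _ ≤ #(powersetCard 2 (range n) \ powersetCard 2 (Ico t n)) +
        #(powersetCard 2 (Ico t (2 * k + 1 - t))) := card_union_le _ _
    _ = n.choose 2 - (n - t).choose 2 + (2 * (k - t) + 1).choose 2 := by
        rw [card_sdiff_of_subset hsub]
        simp only [card_powersetCard, card_range, Nat.card_Ico]
        congr 2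
        omega
    _ ≤ _ := choose_two_sub_add_choose_two_le htk hkn

lemma compression_subset_powersetCard_range {n i j : ℕ} (hij : i < j) {𝒜 : Finset (Finset ℕ)}
    (h𝒜 : 𝒜 ⊆ powersetCard 2 (range n)) : 𝓒 {i} {j} 𝒜 ⊆ powersetCard 2 (range n) := by
  have hsized : (𝓒 {i} {j} 𝒜 : Set (Finset ℕ)).Sized 2 :=
    Set.Sized.uvCompression (by simp) fun A hA ↦ (mem_powersetCard.1 (h𝒜 hA)).2
  refine fun A hA ↦ mem_powersetCard.2 ⟨?_, hsized hA⟩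
  by_cases hA𝒜 : A ∈ 𝒜
  · exact (mem_powersetCard.1 (h𝒜 hA𝒜)).1
  -- `A` was obtained from `(A ∪ {j}) \ {i}` by trading `j` for the smaller `i`
  have hB := (mem_powersetCard.1 (h𝒜 (sup_sdiff_mem_of_mem_compression_of_notMem hA hA𝒜))).1
  have hjn : j < n := mem_range.1 (hB (by simp [hij.ne']))
  intro a ha
  by_cases hai : a = i
  · exact mem_range.2 (by omega)
  · exact hB (by simp [ha, hai])

theorem card_le_of_matchingNumberLE {n k : ℕ} {𝒜 : Finset (Finset ℕ)}
    (h𝒜 : 𝒜 ⊆ powersetCard 2 (range n)) (hm : MatchingNumberLE 𝒜 k) (hkn : k ≤ n) :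
    #𝒜 ≤ max ((2 * k + 1).choose 2) (k.choose 2 + (n - k) * k) := by
  obtain ⟨ℬ, ⟨hℬ₂, hmℬ⟩, hcard, hℬ⟩ :=
    exists_isCompressed (fun ℬ ↦ ℬ ⊆ powersetCard 2 (range n) ∧ MatchingNumberLE ℬ k)
      (fun _ _ _ hij h ↦ ⟨compression_subset_powersetCard_range hij h.1, h.2.uvCompression _ _⟩)
      ⟨h𝒜, hm⟩
  exact hcard ▸ card_le_of_isCompressed hℬ₂ hmℬ hℬ hkn

end Finset

lemma Sym2.toFinset_injective {α : Type*} [DecidableEq α] :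
    Function.Injective (Sym2.toFinset : Sym2 α → Finset α) :=
  fun z w h ↦ Sym2.ext fun x ↦ by rw [← Sym2.mem_toFinset, h, Sym2.mem_toFinset]

namespace SimpleGraph

variable {V : Type*} {G : SimpleGraph V}

lemma Subgraph.exists_isMatching_edgeSet_eq {S : Set (Sym2 V)} (hS : S ⊆ G.edgeSet)
    (hdisj : ∀ e ∈ S, ∀ e' ∈ S, ∀ v ∈ e, v ∈ e' → e = e') :
    ∃ M : G.Subgraph, M.IsMatching ∧ M.edgeSet = S := by
  refine ⟨{ verts := {v | ∃ e ∈ S, v ∈ e}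
            Adj := fun u v ↦ s(u, v) ∈ S
            adj_sub := fun h ↦ hS h
            edge_vert := fun h ↦ ⟨_, h, Sym2.mem_mk_left _ _⟩
            symm := ⟨fun u v h ↦ by rwa [Sym2.eq_swap]⟩ }, ?_, ?_⟩
  · rintro v ⟨e, he, hv⟩
    obtain ⟨w, rfl⟩ := Sym2.mem_iff_exists.1 hv
    exact ⟨w, he, fun y hy ↦ Sym2.congr_right.1 (hdisj _ hy _ he v (Sym2.mem_mk_left _ _) hv)⟩
  · ext e
    induction e using Sym2.ind
    rfl

lemma matchingNumberLE_edgeFinset_image {β : Type*} [DecidableEq V] [DecidableEq β]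
    [Fintype G.edgeSet] (f : V ↪ β) {k : ℕ}
    (h : ∀ M : G.Subgraph, M.IsMatching → M.edgeSet.ncard ≤ k) :
    MatchingNumberLE (G.edgeFinset.image fun e ↦ e.toFinset.map f) k := by
  intro M hM hdisj
  have hinj : Function.Injective fun e : Sym2 V ↦ e.toFinset.map f :=
    (Finset.map_injective f).comp Sym2.toFinset_injective
  set S := {e ∈ G.edgeFinset | e.toFinset.map f ∈ M}
  have hMS : M = S.image fun e ↦ e.toFinset.map f := by
    ext A
    refine ⟨fun hA ↦ ?_, fun hA ↦ ?_⟩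
    · obtain ⟨e, he, rfl⟩ := mem_image.1 (hM hA)
      exact mem_image_of_mem _ (mem_filter.2 ⟨he, hA⟩)
    · obtain ⟨e, he, rfl⟩ := mem_image.1 hA
      exact (mem_filter.1 he).2
  have hSM (e : Sym2 V) (he : e ∈ S) : e.toFinset.map f ∈ (M : Set (Finset β)) :=
    (mem_filter.1 he).2
  obtain ⟨H, hH, hHS⟩ := Subgraph.exists_isMatching_edgeSet_eq (S := S)
    (fun e he ↦ mem_edgeFinset.1 (mem_filter.1 (mem_coe.1 he)).1)
    (fun e he e' he' v hv hv' ↦ hinj (hdisj.elim (hSM e he) (hSM e' he')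
      (not_disjoint_iff.2 ⟨f v, by simpa using hv, by simpa using hv'⟩)))
  calc #M = #S := by rw [hMS, card_image_of_injective _ hinj]
    _ = H.edgeSet.ncard := by rw [hHS, Set.ncard_coe_finset]
    _ ≤ k := h H hH

lemma edgeFinset_image_subset_powersetCard {n : ℕ} (G : SimpleGraph (Fin n)) [DecidableRel G.Adj] :
    (G.edgeFinset.image fun e ↦ e.toFinset.map Fin.valEmbedding) ⊆ powersetCard 2 (range n) := by
  intro A hA
  obtain ⟨e, he, rfl⟩ := mem_image.1 hA
  refine mem_powersetCard.2 ⟨fun a ha ↦ ?_, ?_⟩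
  · obtain ⟨v, -, rfl⟩ := mem_map.1 ha
    exact mem_range.2 v.isLt
  · rw [card_map, Sym2.card_toFinset_of_not_isDiag _
      (G.not_isDiag_of_mem_edgeSet (mem_edgeFinset.1 he))]

end SimpleGraph

/-- **Erdős–Gallai theorem for matchings.** For `n ≥ 2k+1`, if `G` is an
`n`-vertex graph in which every matching has at most `k` edges, then
`e(G) ≤ max{C(2k+1, 2), C(k, 2) + (n−k)k}`. -/
theorem erdos_gallai_matching (n k : ℕ) (hn : 2 * k + 1 ≤ n)
    (G : SimpleGraph (Fin n)) [DecidableRel G.Adj]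
    (hmatch : ∀ M : G.Subgraph, M.IsMatching → M.edgeSet.ncard ≤ k) :
    G.edgeFinset.card ≤ max (Nat.choose (2 * k + 1) 2) (Nat.choose k 2 + (n - k) * k) := by
  have hinj : Function.Injective fun e : Sym2 (Fin n) ↦ e.toFinset.map Fin.valEmbedding :=
    (Finset.map_injective _).comp Sym2.toFinset_injective
  rw [← card_image_of_injective _ hinj]
  exact card_le_of_matchingNumberLE G.edgeFinset_image_subset_powersetCard
    (SimpleGraph.matchingNumberLE_edgeFinset_image Fin.valEmbedding hmatch) (by omega)
end

section
/- Let n ≥ 3 and let δ be an integer with 1 ≤ δ < n/2. If G is a finite simple graph on n vertices with minimum degree δ(G) ≥ δ and e(G) > max{ C(n−δ,2) + δ², C(n−⌊(n−1)/2⌋,2) + ⌊(n−1)/2⌋² }, where C(a,2)=a(a−1)/2, then G contains a Hamilton cycle. -/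
/-!
Suppose `G` is not Hamiltonian and let `H ⊇ G` be a maximal non-Hamiltonian graph. For
non-adjacent `u ≠ v`, `H + uv` is Hamiltonian, so `H` has a Hamilton path from `u` to `v`; if a
neighbour of `u` on it directly followed a neighbour of `v`, the path could be closed into a
Hamilton cycle of `H` (Ore), hence `d(u) + d(v) ≤ n - 1`. Take such a pair maximising
`d(u) + d(v)` with `k = d(u) ≤ d(v)`. At least `k` non-neighbours of `v` have degree at most `k`,
every non-neighbour of `u` has degree at most `n - 1 - k`, and `u` has only `k` neighbours, so
`2 e(H) ≤ 2 (C(n - k, 2) + k²)` with `δ ≤ k ≤ (n - 1) / 2`. As a convex function of `k` this bound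
is largest at an endpoint of that range, which contradicts the lower bound on `e(G) ≤ e(H)`.
-/

open Finset

namespace Nat

theorem choose_two_sub_add_sq_le_max {n a b k : ℕ} (hak : a ≤ k) (hkb : k ≤ b) (hbn : b ≤ n) :
    (n - k).choose 2 + k ^ 2 ≤ max ((n - a).choose 2 + a ^ 2) ((n - b).choose 2 + b ^ 2) := by
  rcases hak.eq_or_lt with rfl | hak; · exact le_max_left _ _
  rcases hkb.eq_or_lt with rfl | hkb; · exact le_max_right _ _
  by_contra! h
  obtain ⟨ha, hb⟩ := max_lt_iff.1 h
  have hcast : ∀ x ≤ n,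
      (((n - x).choose 2 + x ^ 2 : ℕ) : ℚ) = (n - x) * (n - x - 1) / 2 + x ^ 2 :=
    fun x hx => by push_cast [Nat.cast_choose_two, Nat.cast_sub hx]; ring
  have ha' := hcast a (by omega) ▸ hcast k (by omega) ▸ (Nat.cast_lt (α := ℚ)).2 ha
  have hb' := hcast b hbn ▸ hcast k (by omega) ▸ (Nat.cast_lt (α := ℚ)).2 hb
  have hak' : (0 : ℚ) < k - a := by rw [sub_pos]; exact_mod_cast hak
  have hkb' : (0 : ℚ) < b - k := by rw [sub_pos]; exact_mod_cast hkb
  -- With `f x = C(n - x, 2) + x²`: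
  -- `(b - k) (f k - f a) + (k - a) (f k - f b) = -(3/2) (k - a) (b - k) (b - a)`.
  linarith [mul_pos hkb' (sub_pos.2 ha'), mul_pos hak' (sub_pos.2 hb'),
    mul_pos (mul_pos hak' hkb') (add_pos hak' hkb')]

end Nat

namespace SimpleGraph

variable {V : Type*} [Fintype V] [DecidableEq V] {G : SimpleGraph V}

theorem isHamiltonian_iff_exists_equiv_fin {n : ℕ} [NeZero n] (hn : 3 ≤ n)
    (hV : Fintype.card V = n) :
    G.IsHamiltonian ↔ ∃ f : Fin n ≃ V, ∀ i, G.Adj (f i) (f (i + 1)) := by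
  have hcycle : G.IsHamiltonian ↔ cycleGraph n ⊑ G := by
    simp only [cycleGraph_isContained_iff (by omega : 2 < n), IsHamiltonian,
      Walk.isHamiltonianCycle_iff_isCycle_and_length_eq, hV]
    exact ⟨fun h => h (by omega), fun h _ => h⟩
  obtain ⟨m, rfl⟩ : ∃ m, n = m + 2 := ⟨n - 2, by omega⟩
  rw [hcycle]
  constructor
  · rintro ⟨c⟩
    have hc : Function.Bijective c :=
      (Fintype.bijective_iff_injective_and_card c).2 ⟨c.injective, by simp [hV]⟩
    refine ⟨Equiv.ofBijective c hc, fun i => c.toHom.map_adj ?_⟩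
    simp [cycleGraph_adj]
  · rintro ⟨f, hf⟩
    refine ⟨⟨⟨f, fun {a b} hab => ?_⟩, f.injective⟩⟩
    rcases cycleGraph_adj.1 hab with h | h <;> rw [sub_eq_iff_eq_add'] at h <;> subst h
    exacts [(hf b).symm, hf a]

theorem exists_equiv_fin_of_isHamiltonian_sup_edge {n : ℕ} [NeZero n] (hn : 3 ≤ n)
    (hV : Fintype.card V = n) (hG : ¬ G.IsHamiltonian) {u v : V}
    (h : (G ⊔ edge u v).IsHamiltonian) :
    ∃ f : Fin n ≃ V, f 0 = u ∧ f (-1) = v ∧ ∀ i, i ≠ -1 → G.Adj (f i) (f (i + 1)) := by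
  obtain ⟨f, hf⟩ := (isHamiltonian_iff_exists_equiv_fin hn hV).1 h
  obtain ⟨i, hi⟩ : ∃ i, ¬ G.Adj (f i) (f (i + 1)) := by
    by_contra! hall
    exact hG ((isHamiltonian_iff_exists_equiv_fin hn hV).2 ⟨f, hall⟩)
  have hedge := hf i
  rw [sup_adj, edge_adj] at hedge
  obtain ⟨g, hg0, hg1, hg⟩ : ∃ g : Fin n ≃ V, g 0 = u ∧ g (-1) = v ∧
      ∀ t, (G ⊔ edge u v).Adj (g t) (g (t + 1)) := by
    rcases hedge.resolve_left hi with ⟨⟨hu, hv⟩ | ⟨hv, hu⟩, -⟩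
    · refine ⟨(Equiv.subLeft i).trans f, by simpa using hu, by simpa using hv, fun t => ?_⟩
      simpa [sub_add_eq_sub_sub] using (hf (i - t - 1)).symm
    · refine ⟨(Equiv.addLeft (i + 1)).trans f, by simpa using hu, by simpa using hv, fun t => ?_⟩
      simpa [add_assoc] using hf (i + 1 + t)
  refine ⟨g, hg0, hg1, fun t ht => ?_⟩
  have h1 : (1 : Fin n) ≠ -1 := by
    obtain ⟨m, rfl⟩ : ∃ m, n = m + 3 := ⟨n - 3, by omega⟩
    simp [Fin.ext_iff]
  have := hg t
  rw [sup_adj, edge_adj, ← hg0, ← hg1, g.injective.eq_iff, g.injective.eq_iff,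
    g.injective.eq_iff] at this
  rcases this with hadj | ⟨⟨rfl, h⟩ | ⟨rfl, -⟩, -⟩
  · exact hadj
  · exact absurd (by simpa using h) h1
  · exact absurd rfl ht

theorem isHamiltonian_of_adj_succ_of_adj {n : ℕ} [NeZero n] (hn : 3 ≤ n)
    (hV : Fintype.card V = n) (f : Fin n ≃ V) (hf : ∀ i, i ≠ -1 → G.Adj (f i) (f (i + 1)))
    {j : Fin n} (hu : G.Adj (f 0) (f (j + 1))) (hv : G.Adj (f (-1)) (f j)) :
    G.IsHamiltonian := by
  have hj : j ≠ -1 := by rintro rfl; exact hv.ne rfl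
  -- Cycle order `f 0, …, f j, f (-1), f (-2), …, f (j + 1)`: reverse the segment after `j`.
  let σ : Fin n → Fin n := fun i => if i ≤ j then i else j - i
  have hσ : Function.Involutive σ := by
    intro i
    by_cases hi : i ≤ j
    · simp [σ, hi]
    · have : ¬ j - i ≤ j := by
        rw [not_le, Fin.lt_def, Fin.coe_sub_iff_lt.2 (not_le.1 hi)]
        omega
      simp [σ, hi, this]
  obtain ⟨m, rfl⟩ : ∃ m, n = m + 1 := ⟨n - 1, by omega⟩
  have hlast : (-1 : Fin (m + 1)) = Fin.last m := Fin.ext (by simp)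
  have hsucc : ∀ t : Fin (m + 1), t ≠ -1 → (t + 1).val = t.val + 1 := fun t ht => by
    rw [Fin.val_add_one, if_neg (hlast ▸ ht)]
  refine (isHamiltonian_iff_exists_equiv_fin hn hV).2 ⟨hσ.toPerm.trans f, fun t => ?_⟩
  have hne : ∀ t : Fin (m + 1), t ≠ -1 ↔ t.val < m := fun t => by
    rw [hlast, Ne, Fin.ext_iff, Fin.val_last]
    omega
  simp only [Equiv.trans_apply, Function.Involutive.coe_toPerm, σ]
  rcases lt_trichotomy t j with htj | rfl | hjt
  · have ht : t ≠ -1 := (hne t).2 (by have := j.is_lt; omega)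
    have ht' : t + 1 ≤ j := by rw [Fin.le_def, hsucc t ht]; exact htj
    rw [if_pos htj.le, if_pos ht']
    exact hf t ht
  · have ht : ¬ t + 1 ≤ t := by rw [Fin.le_def, hsucc t hj]; omega
    rw [if_pos le_rfl, if_neg ht, show t - (t + 1) = -1 by abel]
    exact hv.symm
  · by_cases ht : t = -1
    · subst ht
      rw [if_neg (not_le.2 hjt), neg_add_cancel, if_pos (Fin.zero_le j), sub_neg_eq_add]
      exact hu.symm
    · have ht' : ¬ t + 1 ≤ j := by rw [Fin.le_def, hsucc t ht]; omega
      have hjt' : j - (t + 1) ≠ -1 := fun h => hjt.ne <| sub_eq_zero.1 <| by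
        rw [show j - t = j - (t + 1) + 1 by abel, h, neg_add_cancel]
      rw [if_neg (not_le.2 hjt), if_neg ht']
      simpa [show j - (t + 1) + 1 = j - t by abel] using (hf _ hjt').symm

theorem degree_add_degree_lt_of_not_isHamiltonian [DecidableRel G.Adj] {n : ℕ} [NeZero n]
    (hn : 3 ≤ n) (hV : Fintype.card V = n) (hG : ¬ G.IsHamiltonian) (f : Fin n ≃ V)
    (hf : ∀ i, i ≠ -1 → G.Adj (f i) (f (i + 1))) :
    G.degree (f 0) + G.degree (f (-1)) < n := by
  set P := univ.filter fun i => G.Adj (f 0) (f (i + 1))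
  set Q := univ.filter fun i => G.Adj (f (-1)) (f i)
  have hP : #P = G.degree (f 0) := by
    rw [← card_neighborFinset_eq_degree]
    exact card_equiv ((Equiv.addRight 1).trans f) (by simp [P])
  have hQ : #Q = G.degree (f (-1)) := by
    rw [← card_neighborFinset_eq_degree]
    exact card_equiv f (by simp [Q])
  have hdisj : Disjoint P Q := Finset.disjoint_left.2 fun _ hjP hjQ =>
    hG (isHamiltonian_of_adj_succ_of_adj hn hV f hf (mem_filter.1 hjP).2 (mem_filter.1 hjQ).2)
  have hsub : P ∪ Q ⊆ univ.erase (-1) := by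
    intro j hj
    refine mem_erase.2 ⟨?_, mem_univ j⟩
    rintro rfl
    rcases mem_union.1 hj with hj | hj <;> simp [P, Q] at hj
  have := card_le_card hsub
  rw [card_union_of_disjoint hdisj, card_erase_of_mem (mem_univ _), card_univ, Fintype.card_fin,
    hP, hQ] at this
  omega

theorem degree_add_degree_lt_of_isHamiltonian_sup_edge [DecidableRel G.Adj]
    (hV : 3 ≤ Fintype.card V) (hG : ¬ G.IsHamiltonian) {u v : V}
    (h : (G ⊔ edge u v).IsHamiltonian) :
    G.degree u + G.degree v < Fintype.card V := by
  have : NeZero (Fintype.card V) := ⟨by omega⟩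
  obtain ⟨f, rfl, rfl, hf⟩ := exists_equiv_fin_of_isHamiltonian_sup_edge hV rfl hG h
  exact degree_add_degree_lt_of_not_isHamiltonian hV rfl hG f hf

theorem card_edgeFinset_le_choose_two_add_sq [DecidableRel G.Adj] (u : V) (S : Finset V)
    (hS : #S = G.degree u) (hSdeg : ∀ w ∈ S, G.degree w ≤ G.degree u)
    (hnadj : ∀ w, ¬ G.Adj u w → G.degree w + G.degree u < Fintype.card V) :
    #G.edgeFinset ≤ (Fintype.card V - G.degree u).choose 2 + G.degree u ^ 2 := by
  set n := Fintype.card V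
  set k := G.degree u
  have hk : 2 * k < n := by have := hnadj u (G.loopless.irrefl u); omega
  have hcompl : ∀ w, G.degree w ≤ (n - 1 - k) + if G.Adj u w then k else 0 := fun w => by
    split_ifs with hw
    · have := G.degree_lt_card_verts w; omega
    · have := hnadj w hw; omega
  have hS' : ∑ w ∈ S, G.degree w ≤ k * k := by
    simpa [hS] using sum_le_card_nsmul S _ _ hSdeg
  have hSc : ∑ w ∈ Sᶜ, G.degree w ≤ (n - k) * (n - 1 - k) + k * k := by
    calc ∑ w ∈ Sᶜ, G.degree w ≤ ∑ w ∈ Sᶜ, ((n - 1 - k) + if G.Adj u w then k else 0) :=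
          sum_le_sum fun w _ => hcompl w
      _ ≤ (n - k) * (n - 1 - k) + ∑ w, if G.Adj u w then k else 0 := by
          rw [sum_add_distrib, sum_const, card_compl, hS, smul_eq_mul]
          exact Nat.add_le_add_left (sum_le_sum_of_subset (subset_univ Sᶜ)) _
      _ = (n - k) * (n - 1 - k) + k * k := by
          rw [sum_ite, sum_const_zero, sum_const, smul_eq_mul, add_zero,
            ← neighborFinset_eq_filter, card_neighborFinset_eq_degree]
  have hchoose : (n - k).choose 2 * 2 = (n - k) * (n - k - 1) := by
    rw [Nat.choose_two_right, Nat.div_mul_cancel (Nat.even_mul_pred_self _).two_dvd]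
  have hsum := G.sum_degrees_eq_twice_card_edges
  rw [← sum_add_sum_compl S] at hsum
  rw [show n - k - 1 = n - 1 - k by omega] at hchoose
  linarith

theorem exists_card_edgeFinset_le_choose_two_add_sq [DecidableRel G.Adj]
    (hore : ∀ u v, u ≠ v → ¬ G.Adj u v → G.degree u + G.degree v < Fintype.card V)
    (hG : ∃ u v, u ≠ v ∧ ¬ G.Adj u v) :
    ∃ u, 2 * G.degree u < Fintype.card V ∧
      #G.edgeFinset ≤ (Fintype.card V - G.degree u).choose 2 + G.degree u ^ 2 := by
  obtain ⟨u, v, huv, hadj, hmax⟩ : ∃ u v, u ≠ v ∧ ¬ G.Adj u v ∧ ∀ w w', w ≠ w' → ¬ G.Adj w w' →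
      G.degree w + G.degree w' ≤ G.degree u + G.degree v := by
    obtain ⟨⟨u, v⟩, hp, hmax⟩ := exists_max_image
      (univ.filter fun p : V × V => p.1 ≠ p.2 ∧ ¬ G.Adj p.1 p.2)
      (fun p => G.degree p.1 + G.degree p.2) (by simpa [Finset.Nonempty] using hG)
    exact ⟨u, v, (mem_filter.1 hp).2.1, (mem_filter.1 hp).2.2,
      fun w w' hww' h => hmax (w, w') (mem_filter.2 ⟨mem_univ _, hww', h⟩)⟩
  wlog hle : G.degree u ≤ G.degree v generalizing u v
  · exact this v u huv.symm (fun h => hadj h.symm) (fun w w' hww' h => add_comm (G.degree u) _ ▸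
      hmax w w' hww' h) (by omega)
  have huv' := hore u v huv hadj
  have hu : ∀ w, ¬ G.Adj u w → G.degree w + G.degree u < Fintype.card V := fun w hw => by
    rcases eq_or_ne w u with rfl | hwu
    · omega
    · have := hore u w hwu.symm hw; omega
  obtain ⟨S, hS, hScard⟩ : ∃ S ⊆ (insert v (G.neighborFinset v))ᶜ, #S = G.degree u := by
    apply exists_subset_card_eq
    rw [card_compl, card_insert_of_notMem (by simp), card_neighborFinset_eq_degree]
    omega
  refine ⟨u, by have := hu u (G.loopless.irrefl u); omega,
    card_edgeFinset_le_choose_two_add_sq u S hScard (fun w hw => ?_) hu⟩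
  have hw := hS hw
  simp only [mem_compl, mem_insert, mem_neighborFinset, not_or] at hw
  have := hmax w v hw.1 fun h => hw.2 h.symm
  omega

theorem isHamiltonian_top (hV : 3 ≤ Fintype.card V) : (⊤ : SimpleGraph V).IsHamiltonian := by
  obtain ⟨m, hm⟩ : ∃ m, Fintype.card V = m + 3 := ⟨_, (Nat.sub_add_cancel hV).symm⟩
  refine (isHamiltonian_iff_exists_equiv_fin (by omega) hm).2
    ⟨(Fintype.equivFinOfCardEq hm).symm, fun i => ?_⟩
  simp

theorem exists_maximal_not_isHamiltonian (hG : ¬ G.IsHamiltonian) :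
    ∃ H, G ≤ H ∧ ¬ H.IsHamiltonian ∧
      ∀ u v, u ≠ v → ¬ H.Adj u v → (H ⊔ edge u v).IsHamiltonian := by
  obtain ⟨H, hGH, hH⟩ :=
    Finite.exists_le_maximal (p := fun H : SimpleGraph V => ¬ H.IsHamiltonian) hG
  refine ⟨H, hGH, hH.1, fun u v huv hadj => ?_⟩
  by_contra h
  exact (lt_sup_edge H u v huv hadj).not_ge (hH.2 h le_sup_left)

end SimpleGraph

open SimpleGraph

theorem erdos_hamilton_general (n δ : ℕ) (hn : 3 ≤ n)
    (G : SimpleGraph (Fin n)) [DecidableRel G.Adj]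
    (hdeg : ∀ v, δ ≤ G.degree v)
    (he : max (Nat.choose (n - δ) 2 + δ ^ 2)
        (Nat.choose (n - (n - 1) / 2) 2 + ((n - 1) / 2) ^ 2) < G.edgeFinset.card) :
    ∃ (v : Fin n) (c : G.Walk v v), c.IsHamiltonianCycle := by
  have hV : 3 ≤ Fintype.card (Fin n) := by simpa using hn
  suffices G.IsHamiltonian from this (by simp; omega)
  by_contra hG
  classical
  obtain ⟨H, hGH, hH, hmax⟩ := exists_maximal_not_isHamiltonian hG
  have hincomplete : ∃ u v, u ≠ v ∧ ¬ H.Adj u v := by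
    by_contra! hall
    exact hH ((isHamiltonian_top hV).mono fun u v huv => hall u v huv)
  obtain ⟨u, hu, hcard⟩ := H.exists_card_edgeFinset_le_choose_two_add_sq
    (fun u v huv hadj => degree_add_degree_lt_of_isHamiltonian_sup_edge hV hH (hmax u v huv hadj))
    hincomplete
  rw [Fintype.card_fin] at hu hcard
  have hδ : δ ≤ H.degree u := (hdeg u).trans (degree_le_of_le hGH)
  have := Nat.choose_two_sub_add_sq_le_max (n := n) (b := (n - 1) / 2) hδ (by omega) (by omega)
  have := card_le_card (edgeFinset_mono hGH)
  omega

/-- **Erdős' theorem.** Let `n ≥ 3` and `1 ≤ δ < n/2`. If `G` is an `n`-vertex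
graph with minimum degree at least `δ` and
`e(G) > max{C(n−δ, 2) + δ², C(n−⌊(n−1)/2⌋, 2) + ⌊(n−1)/2⌋²}`, then `G` contains a
Hamilton cycle. -/
theorem erdos_hamilton (n δ : ℕ) (hn : 3 ≤ n) (hδ1 : 1 ≤ δ) (hδ2 : 2 * δ < n)
    (G : SimpleGraph (Fin n)) [DecidableRel G.Adj]
    (hdeg : ∀ v, δ ≤ G.degree v)
    (he : max (Nat.choose (n - δ) 2 + δ ^ 2)
        (Nat.choose (n - (n - 1) / 2) 2 + ((n - 1) / 2) ^ 2) < G.edgeFinset.card) :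
    ∃ (v : Fin n) (c : G.Walk v v), c.IsHamiltonianCycle :=
  erdos_hamilton_general n δ hn G hdeg he
end

section
/- Let n be an even integer with n = 4 or n ≥ 10. If G is a connected finite simple graph on n vertices with e(G) > C(n−2, 2) + 2, where C(a,2)=a(a−1)/2, then G has a perfect matching. -/
/-!
Suppose `G` has no perfect matching and enlarge it to an edge-maximal graph `Gm` without one.
Adding a missing edge `x y` to `Gm` creates a perfect matching, which must use `x y`; exchanging
it along alternating 4-cycles shows `deg x + deg y ≤ n - 2`. So the complement `H` of `Gm`
satisfies Ore's condition `deg x + deg y ≥ n` on its edges, has maximum degree at most `n - 2`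
(`Gm` is connected), has an edge (`Kₙ` has a perfect matching), and has at most `2n - 6` edges
(`C(n, 2) - C(n - 2, 2) = 2n - 3`). Counting degrees around a vertex of maximum degree shows that
no such `H` exists when `n = 4` or `n ≥ 10`.
-/

open Finset Function

theorem Nat.choose_two_eq_sub_two_choose_two_add {n : ℕ} (hn : 2 ≤ n) :
    n.choose 2 = (n - 2).choose 2 + (2 * n - 3) := by
  obtain ⟨m, rfl⟩ := Nat.exists_eq_add_of_le' hn
  simp only [Nat.add_sub_cancel, Nat.choose_succ_succ', Nat.choose_zero_right, zero_add,
    Nat.choose_one_right, Nat.reduceAdd]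
  omega

namespace SimpleGraph

variable {V : Type*} {G : SimpleGraph V}

theorem exists_isPerfectMatching_iff_exists_involutive :
    (∃ M : G.Subgraph, M.IsPerfectMatching) ↔
      ∃ σ : V → V, Involutive σ ∧ ∀ v, G.Adj v (σ v) := by
  constructor
  · rintro ⟨M, hM⟩
    choose σ hσ hσ_unique using Subgraph.isPerfectMatching_iff.mp hM
    exact ⟨σ, fun v => (hσ_unique _ _ (hσ v).symm).symm, fun v => (hσ v).adj_sub⟩
  · rintro ⟨σ, hσ, hadj⟩
    let M : G.Subgraph :=
      { verts := Set.univ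
        Adj := fun v w => σ v = w
        adj_sub := by rintro v _ rfl; exact hadj v
        edge_vert := fun _ => Set.mem_univ _
        symm := ⟨by rintro v _ rfl; exact hσ v⟩ }
    exact ⟨M, Subgraph.isPerfectMatching_iff.mpr fun v => existsUnique_eq'⟩

/-- Trading the edges `x y` and `v (σ v)` of the matching `σ` for the edges `x v` and
`y (σ v)` of the alternating 4-cycle through them. -/
theorem exists_involutive_of_alternating_four_cycle {σ : V → V} (hσ : Involutive σ)
    {x y v : V} (hσx : σ x = y) (hxy : x ≠ y) (hadj : ∀ u, u ≠ x → u ≠ y → G.Adj u (σ u))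
    (hvy : v ≠ y) (hxv : G.Adj x v) (hyσv : G.Adj y (σ v)) :
    ∃ τ : V → V, Involutive τ ∧ ∀ u, G.Adj u (τ u) := by
  classical
  have hvx : v ≠ x := hxv.ne.symm
  have hσv : σ v ≠ v := (hadj v hvx hvy).ne.symm
  have hσy : σ y = x := hσx ▸ hσ x
  let τ : V → V := fun u =>
    if u = x then v else if u = v then x else if u = y then σ v else if u = σ v then y else σ u
  refine ⟨τ, fun u => ?_, fun u => ?_⟩
  · have := hσ u
    have := hσ v
    simp only [τ]
    split_ifs <;> grind
  · simp only [τ]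
    split_ifs with h1 h2 h3 h4
    · subst h1; exact hxv
    · subst h2; exact hxv.symm
    · subst h3; exact hyσv
    · subst h4; exact hyσv.symm
    · exact hadj u h1 h3

theorem IsMatchingFree.not_exists_involutive (hmf : G.IsMatchingFree) :
    ¬∃ σ : V → V, Involutive σ ∧ ∀ v, G.Adj v (σ v) := fun h =>
  let ⟨M, hM⟩ := exists_isPerfectMatching_iff_exists_involutive.mpr h
  hmf M hM

theorem exists_isPerfectMatching_top [Finite V] (h : Even (Nat.card V)) :
    ∃ M : (⊤ : SimpleGraph V).Subgraph, M.IsPerfectMatching := by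
  obtain ⟨M, hverts, hM⟩ := ((isClique_univ (G := ⊤)).mpr rfl).even_iff_exists_isMatching
    Set.finite_univ |>.mp (by rwa [Set.ncard_univ])
  exact ⟨M, hM, Subgraph.isSpanning_iff.mpr hverts⟩

/-- Adding the missing edge `x y` creates a perfect matching `σ`, necessarily through `x y`;
by the 4-cycle exchange, `σ` maps the neighbours of `x` outside the neighbourhood of `y`. -/
theorem IsMatchingFree.degree_add_degree_add_two_le [Fintype V] [DecidableRel G.Adj]
    (hmf : G.IsMatchingFree) (hmax : ∀ G', G' > G → ∃ M : G'.Subgraph, M.IsPerfectMatching)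
    {x y : V} (hxy : x ≠ y) (hnadj : ¬G.Adj x y) :
    G.degree x + G.degree y + 2 ≤ Fintype.card V := by
  classical
  obtain ⟨σ, hσ, hσadj⟩ := exists_isPerfectMatching_iff_exists_involutive.mp
    (hmax _ (G.lt_sup_edge x y hxy hnadj))
  have hadj : ∀ u, u ≠ x → u ≠ y → G.Adj u (σ u) := by
    intro u hux huy
    simpa [edge_adj, hux, huy] using hσadj u
  -- otherwise `σ` avoids the new edge and is a perfect matching of `G`
  have hσx : σ x = y := by
    by_contra hσx
    refine hmf.not_exists_involutive ⟨σ, hσ, fun u => ?_⟩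
    rcases (hσadj u).imp_right (edge_adj ..).mp with h | ⟨⟨rfl, h⟩ | ⟨rfl, h⟩, -⟩
    · exact h
    · exact absurd h hσx
    · exact absurd (h ▸ hσ u) hσx
  have hσy : σ y = x := hσx ▸ hσ x
  have hsub : (G.neighborFinset x).image σ ∪ G.neighborFinset y ⊆ ({x, y} : Finset V)ᶜ := by
    intro w hw
    simp only [mem_union, mem_image, mem_neighborFinset, mem_compl, mem_insert,
      mem_singleton] at hw ⊢
    rcases hw with ⟨u, hxu, rfl⟩ | hyw
    · rintro (h | h)
      · exact hnadj (by rwa [← hσ u, h, hσx] at hxu)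
      · exact hxu.ne (by rw [← hσ u, h, hσy])
    · rintro (rfl | rfl)
      · exact hnadj hyw.symm
      · exact hyw.ne rfl
  have hdisj : Disjoint ((G.neighborFinset x).image σ) (G.neighborFinset y) := by
    refine Finset.disjoint_left.mpr ?_
    simp only [mem_image, mem_neighborFinset]
    rintro _ ⟨v, hxv, rfl⟩ hyσv
    exact hmf.not_exists_involutive <| exists_involutive_of_alternating_four_cycle hσ hσx hxy
      hadj (by rintro rfl; exact hnadj hxv) hxv hyσv
  calc G.degree x + G.degree y + 2
      = #((G.neighborFinset x).image σ ∪ G.neighborFinset y) + #({x, y} : Finset V) := by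
        rw [card_union_of_disjoint hdisj, card_image_of_injective _ hσ.injective,
          card_pair hxy, card_neighborFinset_eq_degree, card_neighborFinset_eq_degree]
    _ ≤ #({x, y} : Finset V)ᶜ + #({x, y} : Finset V) := by
        gcongr
    _ = Fintype.card V := card_compl_add_card _

theorem IsMatchingFree.exists_compl_adj [Finite V] (h : Even (Nat.card V))
    (hmf : G.IsMatchingFree) : ∃ x y, Gᶜ.Adj x y := by
  by_contra! hG
  rw [← eq_bot_iff_forall_not_adj, compl_eq_bot] at hG
  subst hG
  obtain ⟨M, hM⟩ := exists_isPerfectMatching_top h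
  exact hmf M hM

theorem IsMatchingFree.card_le_degree_compl_add_degree_compl [Fintype V] [DecidableEq V]
    [DecidableRel G.Adj] (hmf : G.IsMatchingFree)
    (hmax : ∀ G', G' > G → ∃ M : G'.Subgraph, M.IsPerfectMatching) ⦃x y : V⦄
    (hxy : Gᶜ.Adj x y) : Fintype.card V ≤ Gᶜ.degree x + Gᶜ.degree y := by
  have := hmf.degree_add_degree_add_two_le hmax hxy.ne ((compl_adj ..).mp hxy).2
  have := G.degree_lt_card_verts x
  have := G.degree_lt_card_verts y
  rw [degree_compl, degree_compl]
  omega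

theorem card_edgeFinset_add_card_edgeFinset_compl [Fintype V] [DecidableEq V]
    (G : SimpleGraph V) [DecidableRel G.Adj] :
    #G.edgeFinset + #Gᶜ.edgeFinset = (Fintype.card V).choose 2 := by
  rw [← card_union_of_disjoint (disjoint_edgeFinset.mpr disjoint_compl_right), ← edgeFinset_sup,
    ← card_edgeFinset_top_eq_card_choose_two]
  congr!
  exact sup_compl_eq_top

section DegreeCounting

variable [Fintype V] {H : SimpleGraph V} [DecidableRel H.Adj]

theorem degree_add_sum_add_mul_le_sum_degrees [DecidableEq V] {u : V} {A : Finset V}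
    (hu : u ∉ A) {k : ℕ} (hk : ∀ z ∈ H.neighborFinset u, k ≤ H.degree z) :
    H.degree u + ∑ v ∈ A, H.degree v + k * (H.degree u - #A) ≤ ∑ v, H.degree v := by
  set T := H.neighborFinset u \ A
  have hT : k * (H.degree u - #A) ≤ ∑ v ∈ T, H.degree v :=
    calc k * (H.degree u - #A) ≤ #T * k := by
          rw [mul_comm, ← card_neighborFinset_eq_degree]
          gcongr
          exact le_card_sdiff _ _
      _ ≤ ∑ v ∈ T, H.degree v := card_nsmul_le_sum _ _ _ fun z hz => hk z (mem_sdiff.mp hz).1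
  have huT : u ∉ A ∪ T := by simp [T, hu]
  calc H.degree u + ∑ v ∈ A, H.degree v + k * (H.degree u - #A)
      ≤ H.degree u + (∑ v ∈ A, H.degree v + ∑ v ∈ T, H.degree v) := by omega
    _ = ∑ v ∈ insert u (A ∪ T), H.degree v := by
        rw [sum_insert huT, sum_union disjoint_sdiff]
    _ ≤ ∑ v, H.degree v := sum_le_sum_of_subset (subset_univ _)

theorem two_le_degree_of_adj
    (hore : ∀ ⦃x y⦄, H.Adj x y → Fintype.card V ≤ H.degree x + H.degree y)
    (hΔ : ∀ v, H.degree v + 2 ≤ Fintype.card V) {u z : V} (huz : H.Adj u z) :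
    2 ≤ H.degree z := by
  have := hore huz
  have := hΔ u
  omega

/-- A vertex of degree `d` has `d` neighbours of degree at least `n - d`; for
`n / 2 ≤ d ≤ n - 4` this already exceeds the degree sum `4n - 12`. -/
theorem large_degree_of_adj (hn : 10 ≤ Fintype.card V)
    (hS : ∑ v, H.degree v + 12 ≤ 4 * Fintype.card V)
    (hore : ∀ ⦃x y⦄, H.Adj x y → Fintype.card V ≤ H.degree x + H.degree y)
    {x y : V} (hxy : H.Adj x y) :
    Fintype.card V - 3 ≤ H.degree x ∨ Fintype.card V - 3 ≤ H.degree y := by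
  wlog hyx : H.degree y ≤ H.degree x generalizing x y
  · exact (this hxy.symm (by omega)).symm
  classical
  left
  by_contra! hx
  set n := Fintype.card V
  set d := H.degree x
  have hsum := degree_add_sum_add_mul_le_sum_degrees (notMem_empty x) (k := n - d)
    fun z hz => by have := hore ((H.mem_neighborFinset x z).mp hz); omega
  simp only [sum_empty, card_empty, Nat.sub_zero, add_zero] at hsum
  have h2d : n ≤ 2 * d := by have := hore hxy; omega
  have hdn : d + 4 ≤ n := by omega
  zify [show d ≤ n by omega] at hsum
  nlinarith [mul_nonneg (by linarith : (0:ℤ) ≤ 2 * d - n) (by linarith : (0:ℤ) ≤ n - 4 - d),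
    mul_nonneg (by linarith : (0:ℤ) ≤ n - 4 - d) (by linarith : (0:ℤ) ≤ n - 10)]

theorem not_three_large_degree (hn : 8 ≤ Fintype.card V)
    (hS : ∑ v, H.degree v + 12 ≤ 4 * Fintype.card V)
    (hore : ∀ ⦃x y⦄, H.Adj x y → Fintype.card V ≤ H.degree x + H.degree y)
    (hΔ : ∀ v, H.degree v + 2 ≤ Fintype.card V) {u v w : V} (huv : u ≠ v) (huw : u ≠ w)
    (hvw : v ≠ w) (hu : Fintype.card V - 3 ≤ H.degree u) (hv : Fintype.card V - 3 ≤ H.degree v)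
    (hw : Fintype.card V - 3 ≤ H.degree w) : False := by
  classical
  have hsum := degree_add_sum_add_mul_le_sum_degrees (A := {v, w}) (by simp [huv, huw]) (k := 2)
    fun z hz => two_le_degree_of_adj hore hΔ ((H.mem_neighborFinset u z).mp hz)
  rw [sum_pair hvw, card_pair hvw] at hsum
  omega

theorem lt_sum_degrees_add_twelve_of_ten_le (hn : 10 ≤ Fintype.card V)
    (hore : ∀ ⦃x y⦄, H.Adj x y → Fintype.card V ≤ H.degree x + H.degree y)
    (hΔ : ∀ v, H.degree v + 2 ≤ Fintype.card V) {x y : V} (hxy : H.Adj x y) :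
    4 * Fintype.card V < ∑ v, H.degree v + 12 := by
  classical
  by_contra! hS
  set n := Fintype.card V
  have hcover : ∀ ⦃a b⦄, H.Adj a b → n - 3 ≤ H.degree a ∨ n - 3 ≤ H.degree b :=
    fun _ _ h => large_degree_of_adj hn hS hore h
  obtain ⟨u, hu⟩ : ∃ u, n - 3 ≤ H.degree u := (hcover hxy).elim (⟨x, ·⟩) (⟨y, ·⟩)
  obtain ⟨v, hvu, hv⟩ : ∃ v ≠ u, n - 3 ≤ H.degree v := by
    obtain ⟨z, huz⟩ := (H.degree_pos_iff_exists_adj u).mp (by omega)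
    obtain ⟨z', hzz', hz'u⟩ := exists_mem_ne (two_le_degree_of_adj hore hΔ huz) u
    rcases hcover ((H.mem_neighborFinset z z').mp hzz') with h | h
    exacts [⟨z, huz.ne.symm, h⟩, ⟨z', hz'u, h⟩]
  have hlarge : ∀ s, n - 3 ≤ H.degree s → s = u ∨ s = v := by
    intro s hs
    by_contra! h
    exact not_three_large_degree (by omega) hS hore hΔ hvu.symm h.1.symm h.2.symm hu hv hs
  -- all edges meet `{u, v}`, so the other vertices have degree at most 2
  have hsmall : ∀ t, t ≠ u → t ≠ v → H.degree t ≤ 2 := by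
    intro t htu htv
    calc H.degree t = #(H.neighborFinset t) := (card_neighborFinset_eq_degree _ _).symm
      _ ≤ #{u, v} := card_le_card fun s hs => by
          have hts := (H.mem_neighborFinset t s).mp hs
          rcases hcover hts with h | h
          · exact absurd (hlarge t h) (by tauto)
          · simpa using hlarge s h
      _ ≤ 2 := card_le_two
  have hbig : ∀ a b, n - 3 ≤ H.degree a → (∀ t, t ≠ a → t ≠ b → H.degree t ≤ 2) →
      n - 2 ≤ H.degree a := by
    intro a b ha hsmall
    obtain ⟨t, hat, htb⟩ := exists_mem_ne (s := H.neighborFinset a)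
      (by rw [card_neighborFinset_eq_degree]; omega) b
    have hat := (H.mem_neighborFinset a t).mp hat
    have := hore hat
    have := hsmall t hat.ne.symm htb
    omega
  have hu2 := hbig u v hu hsmall
  have hv2 := hbig v u hv fun t h1 h2 => hsmall t h2 h1
  have hsum := degree_add_sum_add_mul_le_sum_degrees (A := {v}) (by simpa using hvu.symm) (k := 2)
    fun z hz => two_le_degree_of_adj hore hΔ ((H.mem_neighborFinset u z).mp hz)
  rw [sum_singleton, card_singleton] at hsum
  omega

theorem lt_card_edgeFinset_add_six (hn : Fintype.card V = 4 ∨ 10 ≤ Fintype.card V)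
    (hore : ∀ ⦃x y⦄, H.Adj x y → Fintype.card V ≤ H.degree x + H.degree y)
    (hΔ : ∀ v, H.degree v + 2 ≤ Fintype.card V) {x y : V} (hxy : H.Adj x y) :
    2 * Fintype.card V < #H.edgeFinset + 6 := by
  classical
  have hdeg := H.sum_degrees_eq_twice_card_edges
  rcases hn with hn | hn
  · have hsum := degree_add_sum_add_mul_le_sum_degrees (notMem_empty x) (k := 2)
      fun z hz => two_le_degree_of_adj hore hΔ ((H.mem_neighborFinset x z).mp hz)
    have := hore hxy
    have := hΔ y
    simp only [sum_empty, card_empty, Nat.sub_zero, add_zero] at hsum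
    omega
  · have := lt_sum_degrees_add_twelve_of_ten_le hn hore hΔ hxy
    omega

end DegreeCounting

end SimpleGraph

open SimpleGraph

/-- **Suil O's theorem.** Let `n` be even with `n = 4` or `n ≥ 10`. If `G` is a
connected `n`-vertex graph with `e(G) > C(n−2, 2) + 2`, then `G` has a perfect
matching. -/
theorem perfectMatching_of_many_edges (n : ℕ) (heven : Even n) (hn : n = 4 ∨ 10 ≤ n)
    (G : SimpleGraph (Fin n)) [DecidableRel G.Adj] (hconn : G.Connected)
    (he : Nat.choose (n - 2) 2 + 2 < G.edgeFinset.card) :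
    ∃ M : G.Subgraph, M.IsPerfectMatching := by
  classical
  by_contra hno
  obtain ⟨Gm, hle, hmf, hmax⟩ := exists_maximal_isMatchingFree fun M hM => hno ⟨M, hM⟩
  have hcard : Fintype.card (Fin n) = n := Fintype.card_fin n
  have : Nontrivial (Fin n) := Fin.nontrivial_iff_two_le.mpr (by omega)
  have hΔ : ∀ v, Gmᶜ.degree v + 2 ≤ Fintype.card (Fin n) := fun v => by
    have := (hconn.mono hle).preconnected.degree_pos_of_nontrivial v
    rw [degree_compl]
    omega
  obtain ⟨x, y, hxy⟩ := hmf.exists_compl_adj (by simpa using heven)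
  have hcompl := lt_card_edgeFinset_add_six (by omega)
    (hmf.card_le_degree_compl_add_degree_compl hmax) hΔ hxy
  have hsplit := hcard ▸ card_edgeFinset_add_card_edgeFinset_compl Gm
  have hmono := card_le_card (edgeFinset_mono hle)
  have hchoose := Nat.choose_two_eq_sub_two_choose_two_add (n := n) (by omega)
  omega
end
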